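/- arXiv:1209.4909 — 9 statements merged into one kernel-verified Lean document; each statement's English description precedes it below -/
import Mathlib

section
/- Let a ≥ b > 0 and set k = a/√(a² + b²). Then ∫₀^a p²/√(a²b² + (a² − b²)p² − p⁴) dp = √(a² + b²)·E(k) − (b²/√(a² + b²))·K(k), where K(k) = ∫₀^{π/2} dθ/√(1 − k² sin²θ) and E(k) = ∫₀^{π/2} √(1 − k² sin²θ) dθ are the complete elliptic integrals of the first and second kind. -/
open Real

/-- Complete elliptic integral of the first kind. -/
noncomputable def ellipticK (k : ℝ) : ℝ :=
  ∫ θ in (0:ℝ)..(π / 2), 1 / Real.sqrt (1 - k ^ 2 * Real.sin θ ^ 2)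

/-- Complete elliptic integral of the second kind. -/
noncomputable def ellipticE (k : ℝ) : ℝ :=
  ∫ θ in (0:ℝ)..(π / 2), Real.sqrt (1 - k ^ 2 * Real.sin θ ^ 2)

/-!
Substituting `p = a cos θ` factors the radicand as `(a sin θ)² (b² + a² cos² θ)`, so the
Jacobian `a sin θ` cancels the singular factor and the integrand becomes
`a² cos² θ / √(b² + a² cos² θ)`. Since `b² + a² cos² θ = (a² + b²)(1 - k² sin² θ)`, this equals
`√(a² + b²) √(1 - k² sin² θ) - (b² / √(a² + b²)) / √(1 - k² sin² θ)`, whose integrals over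
`[0, π/2]` are the two complete elliptic integrals.
-/

open Set MeasureTheory

section Substitution

variable {E : Type*} [NormedAddCommGroup E] [NormedSpace ℝ E]

theorem integral_eq_integral_sin_smul_comp_cos_of_nonneg {a : ℝ} (ha : 0 ≤ a) (g : ℝ → E) :
    ∫ p in (0:ℝ)..a, g p = ∫ θ in (0:ℝ)..(π / 2), (a * sin θ) • g (a * cos θ) := by
  have h := integral_Icc_deriv_smul_of_deriv_nonpos (a := 0) (b := π / 2) (g := g)
    (f := fun θ => a * cos θ) (f' := fun θ => -(a * sin θ)) (by fun_prop)
    (fun θ _ => by simpa using (hasDerivAt_cos θ).const_mul a)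
    (fun θ hθ => neg_nonpos.2 <| mul_nonneg ha <|
      sin_nonneg_of_nonneg_of_le_pi hθ.1.le (by linarith [hθ.2, pi_pos]))
    (by positivity)
  simp only [cos_pi_div_two, cos_zero, mul_zero, mul_one, neg_smul, integral_neg, neg_inj] at h
  rw [intervalIntegral.integral_of_le ha, intervalIntegral.integral_of_le (by positivity),
    ← integral_Icc_eq_integral_Ioc, ← integral_Icc_eq_integral_Ioc, h]

theorem integral_eq_integral_sin_smul_comp_cos (a : ℝ) (g : ℝ → E) :
    ∫ p in (0:ℝ)..a, g p = ∫ θ in (0:ℝ)..(π / 2), (a * sin θ) • g (a * cos θ) := by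
  rcases le_total 0 a with ha | ha
  · exact integral_eq_integral_sin_smul_comp_cos_of_nonneg ha g
  · have h := integral_eq_integral_sin_smul_comp_cos_of_nonneg (neg_nonneg.2 ha) (fun p => g (-p))
    simp only [intervalIntegral.integral_comp_neg, neg_neg, neg_zero, neg_mul, neg_smul] at h
    rw [intervalIntegral.integral_symm, h, intervalIntegral.integral_neg, neg_neg]

end Substitution

theorem mul_sq_div_sqrt_quartic {a b s q : ℝ} (hs : 0 < s) (hsq : s ^ 2 + q ^ 2 = a ^ 2) :
    s * (q ^ 2 / √(a ^ 2 * b ^ 2 + (a ^ 2 - b ^ 2) * q ^ 2 - q ^ 4))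
      = q ^ 2 / √(b ^ 2 + q ^ 2) := by
  have hfactor : a ^ 2 * b ^ 2 + (a ^ 2 - b ^ 2) * q ^ 2 - q ^ 4 = s ^ 2 * (b ^ 2 + q ^ 2) := by
    rw [← hsq]; ring
  rw [hfactor, sqrt_mul (sq_nonneg s), sqrt_sq hs.le, ← mul_div_assoc, mul_div_mul_left _ _ hs.ne']

theorem sq_add_mul_cos_sq_eq (a b θ : ℝ) :
    b ^ 2 + (a * cos θ) ^ 2
      = √(a ^ 2 + b ^ 2) ^ 2 * (1 - (a / √(a ^ 2 + b ^ 2)) ^ 2 * sin θ ^ 2) := by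
  rcases (by positivity : 0 ≤ a ^ 2 + b ^ 2).eq_or_lt with hzero | hpos
  · obtain ⟨rfl, rfl⟩ : a = 0 ∧ b = 0 :=
      ⟨by nlinarith [sq_nonneg b], by nlinarith [sq_nonneg a]⟩
    simp
  · rw [div_pow, sq_sqrt hpos.le]
    field_simp
    linear_combination a ^ 2 * sin_sq_add_cos_sq θ

theorem sq_div_sqrt_eq_elliptic_integrands (a b θ : ℝ) :
    (a * cos θ) ^ 2 / √(b ^ 2 + (a * cos θ) ^ 2)
      = √(a ^ 2 + b ^ 2) * √(1 - (a / √(a ^ 2 + b ^ 2)) ^ 2 * sin θ ^ 2)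
        - b ^ 2 / √(a ^ 2 + b ^ 2) * (1 / √(1 - (a / √(a ^ 2 + b ^ 2)) ^ 2 * sin θ ^ 2)) := by
  have hsqrt : √(b ^ 2 + (a * cos θ) ^ 2)
      = √(a ^ 2 + b ^ 2) * √(1 - (a / √(a ^ 2 + b ^ 2)) ^ 2 * sin θ ^ 2) := by
    rw [sq_add_mul_cos_sq_eq, sqrt_mul (sq_nonneg _), sqrt_sq (sqrt_nonneg _)]
  calc (a * cos θ) ^ 2 / √(b ^ 2 + (a * cos θ) ^ 2)
      = (b ^ 2 + (a * cos θ) ^ 2 - b ^ 2) / √(b ^ 2 + (a * cos θ) ^ 2) := by ring_nf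
    _ = √(b ^ 2 + (a * cos θ) ^ 2) - b ^ 2 / √(b ^ 2 + (a * cos θ) ^ 2) := by
      rw [sub_div, div_sqrt]
    _ = _ := by rw [hsqrt, div_mul_div_comm, mul_one]

theorem sq_div_sqrt_sq_add_sq_lt_one {a b : ℝ} (hb : b ≠ 0) : (a / √(a ^ 2 + b ^ 2)) ^ 2 < 1 := by
  have hb2 : 0 < b ^ 2 := by positivity
  rw [div_pow, sq_sqrt (by positivity), div_lt_one (by positivity)]
  linarith

theorem integral_mul_sqrt_sub_mul_one_div_sqrt {k : ℝ} (hk : k ^ 2 < 1) (c d : ℝ) :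
    ∫ θ in (0:ℝ)..(π / 2), (c * √(1 - k ^ 2 * sin θ ^ 2) - d * (1 / √(1 - k ^ 2 * sin θ ^ 2)))
      = c * ellipticE k - d * ellipticK k := by
  have hpos (θ : ℝ) : 0 < 1 - k ^ 2 * sin θ ^ 2 := by
    nlinarith [sin_sq_le_one θ, sq_nonneg k]
  have hcont : Continuous fun θ => √(1 - k ^ 2 * sin θ ^ 2) := by fun_prop
  rw [intervalIntegral.integral_sub, intervalIntegral.integral_const_mul,
    intervalIntegral.integral_const_mul, ellipticE, ellipticK]
  · exact (continuous_const.mul hcont).intervalIntegrable _ _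
  · exact (continuous_const.mul <| continuous_const.div hcont fun θ =>
      (sqrt_pos.2 (hpos θ)).ne').intervalIntegrable _ _

/-- Maclaurin's limit hyperbolic excess expressed through complete elliptic
integrals of the first and second kind, with modulus `k = a/√(a² + b²)`. -/
theorem maclaurin_excess_elliptic (a b : ℝ) (hb : 0 < b) (hab : b ≤ a)
    (k : ℝ) (hk : k = a / Real.sqrt (a ^ 2 + b ^ 2)) :
    ∫ p in (0:ℝ)..a,
        p ^ 2 / Real.sqrt (a ^ 2 * b ^ 2 + (a ^ 2 - b ^ 2) * p ^ 2 - p ^ 4)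
      = Real.sqrt (a ^ 2 + b ^ 2) * ellipticE k
        - b ^ 2 / Real.sqrt (a ^ 2 + b ^ 2) * ellipticK k := by
  subst hk
  have ha : 0 < a := hb.trans_le hab
  rw [integral_eq_integral_sin_smul_comp_cos,
    ← integral_mul_sqrt_sub_mul_one_div_sqrt (sq_div_sqrt_sq_add_sq_lt_one hb.ne')]
  refine intervalIntegral.integral_congr_Ioo_of_le (by positivity) fun θ hθ => ?_
  have hsin : 0 < sin θ := sin_pos_of_pos_of_lt_pi hθ.1 (by linarith [hθ.2, pi_pos])
  rw [smul_eq_mul, mul_sq_div_sqrt_quartic (mul_pos ha hsin)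
    (by linear_combination a ^ 2 * sin_sq_add_cos_sq θ), sq_div_sqrt_eq_elliptic_integrands]
end

section
/- Fix b > 0 and define for a > 0 the limit excess f(a) = √(a² + b²)·E(a/√(a² + b²)) − (b²/√(a² + b²))·K(a/√(a² + b²)), where K and E are the complete elliptic integrals of the first and second kind. Then, as a → 0⁺, f(a) = (π a²)/(4b) − (3π a⁴)/(32 b³) + (15π a⁶)/(256 b⁵) + O(a⁸); that is, the function a ↦ f(a) − ((π a²)/(4b) − (3π a⁴)/(32 b³) + (15π a⁶)/(256 b⁵)) is O(a⁸) as a → 0⁺. -/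
/-!
With `k = a / √(a² + b²)` one has `1 - k² sin² θ = (b² + a² cos² θ) / (a² + b²)`, so the `E` and `K`
integrands combine into the single integral `∫₀^{π/2} u / √(b² + u) dθ` with `u = a² cos² θ`.
Expanding `u / √(b² + u) = u / b - u² / (2b³) + 3u³ / (8b⁵) + O(u⁴)` uniformly for `u ≥ 0` and
integrating with the Wallis values `∫₀^{π/2} cos^{2n} θ dθ = π/4, 3π/16, 5π/32` (`n = 1, 2, 3`)
gives the series, with error at most `5π a⁸ / (32 b⁷)` for every `a`.
-/

open Real Filter Asymptotics

theorem abs_inv_sqrt_one_add_sub_taylor_le {t : ℝ} (ht : 0 ≤ t) :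
    |(√(1 + t))⁻¹ - (1 - t / 2 + 3 * t ^ 2 / 8)| ≤ 5 / 16 * t ^ 3 := by
  set s := √(1 + t)
  have hs1 : 1 ≤ s := Real.one_le_sqrt.mpr (by linarith)
  have ht_eq : t = s ^ 2 - 1 := by rw [Real.sq_sqrt (by linarith)]; ring
  -- with `t = s² - 1` the Taylor remainder factors through `(s - 1)³`
  have hrem :
      1 - t / 2 + 3 * t ^ 2 / 8 - s⁻¹ = (s - 1) ^ 3 * (3 * s ^ 2 + 9 * s + 8) / (8 * s) := by
    rw [ht_eq]; field_simp; ring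
  have hcube : 0 ≤ (s - 1) ^ 3 := pow_nonneg (by linarith) 3
  rw [abs_sub_comm, abs_of_nonneg (by rw [hrem]; positivity), hrem, ht_eq,
    div_le_iff₀ (by positivity)]
  have hkey : 2 * (3 * s ^ 2 + 9 * s + 8) ≤ 5 * s * (s + 1) ^ 3 := by nlinarith
  nlinarith [mul_le_mul_of_nonneg_left hkey hcube]

theorem abs_div_sqrt_sq_add_sub_taylor_le {b u : ℝ} (hb : 0 < b) (hu : 0 ≤ u) :
    |u / √(b ^ 2 + u) - (u / b - u ^ 2 / (2 * b ^ 3) + 3 * u ^ 3 / (8 * b ^ 5))|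
      ≤ 5 * u ^ 4 / (16 * b ^ 7) := by
  have hsqrt : √(b ^ 2 + u) = b * √(1 + u / b ^ 2) := by
    rw [← Real.sqrt_sq hb.le, ← Real.sqrt_mul (sq_nonneg b), Real.sqrt_sq hb.le]
    field_simp
  have h := abs_inv_sqrt_one_add_sub_taylor_le (div_nonneg hu (sq_nonneg b))
  have hscale : u / √(b ^ 2 + u) - (u / b - u ^ 2 / (2 * b ^ 3) + 3 * u ^ 3 / (8 * b ^ 5))
      = u / b * ((√(1 + u / b ^ 2))⁻¹ - (1 - u / b ^ 2 / 2 + 3 * (u / b ^ 2) ^ 2 / 8)) := by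
    rw [hsqrt]; field_simp
  rw [hscale, abs_mul, abs_of_nonneg (div_nonneg hu hb.le)]
  calc u / b * |_| ≤ u / b * (5 / 16 * (u / b ^ 2) ^ 3) :=
        mul_le_mul_of_nonneg_left h (div_nonneg hu hb.le)
    _ = 5 * u ^ 4 / (16 * b ^ 7) := by field_simp

noncomputable def limitExcess (b a : ℝ) : ℝ :=
  Real.sqrt (a ^ 2 + b ^ 2) * ellipticE (a / Real.sqrt (a ^ 2 + b ^ 2))
    - b ^ 2 / Real.sqrt (a ^ 2 + b ^ 2) * ellipticK (a / Real.sqrt (a ^ 2 + b ^ 2))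

theorem limitExcess_eq_integral {b : ℝ} (hb : b ≠ 0) (a : ℝ) :
    limitExcess b a = ∫ θ in (0:ℝ)..(π / 2), (a * cos θ) ^ 2 / √(b ^ 2 + (a * cos θ) ^ 2) := by
  rw [limitExcess, ellipticE, ellipticK]
  set S := √(a ^ 2 + b ^ 2)
  have hS : 0 < S := Real.sqrt_pos.mpr (by positivity)
  have hS2 : S ^ 2 = a ^ 2 + b ^ 2 := Real.sq_sqrt (by positivity)
  have hdelta : ∀ θ, 1 - (a / S) ^ 2 * sin θ ^ 2 = (b ^ 2 + (a * cos θ) ^ 2) / S ^ 2 := by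
    intro θ
    field_simp
    linear_combination hS2 - a ^ 2 * sin_sq_add_cos_sq θ
  have hsqrt : ∀ θ, √(1 - (a / S) ^ 2 * sin θ ^ 2) = √(b ^ 2 + (a * cos θ) ^ 2) / S := by
    intro θ
    rw [hdelta, Real.sqrt_div' _ (sq_nonneg S), Real.sqrt_sq hS.le]
  have hpos : ∀ θ, 0 < √(b ^ 2 + (a * cos θ) ^ 2) := fun θ => Real.sqrt_pos.mpr (by positivity)
  have hcontE : Continuous fun θ => S * (√(b ^ 2 + (a * cos θ) ^ 2) / S) := by fun_prop
  have hcontK : Continuous fun θ => b ^ 2 / S * (1 / (√(b ^ 2 + (a * cos θ) ^ 2) / S)) :=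
    continuous_const.mul <| continuous_const.div (by fun_prop) fun θ => (div_pos (hpos θ) hS).ne'
  simp only [hsqrt]
  rw [← intervalIntegral.integral_const_mul, ← intervalIntegral.integral_const_mul,
    ← intervalIntegral.integral_sub (hcontE.intervalIntegrable _ _) (hcontK.intervalIntegrable _ _)]
  refine intervalIntegral.integral_congr fun θ _ => ?_
  have hsq := Real.sq_sqrt (by positivity : 0 ≤ b ^ 2 + (a * cos θ) ^ 2)
  have hw := (hpos θ).ne'
  set w := √(b ^ 2 + (a * cos θ) ^ 2)
  field_simp
  linear_combination hsq

theorem integral_cos_pow_add_two_zero_pi_div_two (n : ℕ) :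
    ∫ θ in (0:ℝ)..(π / 2), cos θ ^ (n + 2)
      = (n + 1) / (n + 2) * ∫ θ in (0:ℝ)..(π / 2), cos θ ^ n := by
  simp [integral_cos_pow]

theorem integral_taylor_excess_integrand (a b : ℝ) :
    ∫ θ in (0:ℝ)..(π / 2), ((a * cos θ) ^ 2 / b - ((a * cos θ) ^ 2) ^ 2 / (2 * b ^ 3)
        + 3 * ((a * cos θ) ^ 2) ^ 3 / (8 * b ^ 5))
      = π * a ^ 2 / (4 * b) - 3 * π * a ^ 4 / (32 * b ^ 3) + 15 * π * a ^ 6 / (256 * b ^ 5) := by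
  have h2 : ∫ θ in (0:ℝ)..(π / 2), cos θ ^ 2 = π / 4 := by simp [integral_cos_sq]; ring
  have h4 := integral_cos_pow_add_two_zero_pi_div_two 2
  have h6 := integral_cos_pow_add_two_zero_pi_div_two 4
  norm_num at h4 h6
  have hpoly : ∀ θ, (a * cos θ) ^ 2 / b - ((a * cos θ) ^ 2) ^ 2 / (2 * b ^ 3)
      + 3 * ((a * cos θ) ^ 2) ^ 3 / (8 * b ^ 5)
      = a ^ 2 / b * cos θ ^ 2 - a ^ 4 / (2 * b ^ 3) * cos θ ^ 4
        + 3 * a ^ 6 / (8 * b ^ 5) * cos θ ^ 6 := fun θ => by ring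
  simp only [hpoly]
  rw [intervalIntegral.integral_add, intervalIntegral.integral_sub,
    intervalIntegral.integral_const_mul, intervalIntegral.integral_const_mul,
    intervalIntegral.integral_const_mul, h6, h4, h2]
  · ring
  all_goals exact (by fun_prop : Continuous _).intervalIntegrable _ _

theorem abs_limitExcess_sub_taylor_le {b : ℝ} (hb : 0 < b) (a : ℝ) :
    |limitExcess b a - (π * a ^ 2 / (4 * b) - 3 * π * a ^ 4 / (32 * b ^ 3)
        + 15 * π * a ^ 6 / (256 * b ^ 5))| ≤ 5 * π / (32 * b ^ 7) * a ^ 8 := by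
  have hcos : ∀ θ, (a * cos θ) ^ 2 ≤ a ^ 2 := fun θ => by
    rw [mul_pow]; exact mul_le_of_le_one_right (sq_nonneg a) (cos_sq_le_one θ)
  have hpointwise : ∀ θ, ‖(a * cos θ) ^ 2 / √(b ^ 2 + (a * cos θ) ^ 2)
      - ((a * cos θ) ^ 2 / b - ((a * cos θ) ^ 2) ^ 2 / (2 * b ^ 3)
        + 3 * ((a * cos θ) ^ 2) ^ 3 / (8 * b ^ 5))‖ ≤ 5 * (a ^ 2) ^ 4 / (16 * b ^ 7) := fun θ =>
    (abs_div_sqrt_sq_add_sub_taylor_le hb (sq_nonneg _)).trans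
      (by gcongr 5 * ?_ ^ 4 / _; exact hcos θ)
  have hcont : Continuous fun θ => (a * cos θ) ^ 2 / √(b ^ 2 + (a * cos θ) ^ 2) :=
    (by fun_prop : Continuous _).div (by fun_prop) fun θ => (Real.sqrt_pos.mpr (by positivity)).ne'
  rw [limitExcess_eq_integral hb.ne', ← integral_taylor_excess_integrand,
    ← intervalIntegral.integral_sub (hcont.intervalIntegrable _ _)
      ((by fun_prop : Continuous _).intervalIntegrable _ _)]
  calc _ ≤ 5 * (a ^ 2) ^ 4 / (16 * b ^ 7) * |π / 2 - 0| :=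
        intervalIntegral.norm_integral_le_of_norm_le_const fun θ _ => hpointwise θ
    _ = 5 * π / (32 * b ^ 7) * a ^ 8 := by
        rw [sub_zero, abs_of_pos (by positivity)]; ring

/-- Maclaurin's series for the limit hyperbolic excess: as `a → 0⁺`,
`f(a) = πa²/(4b) − 3πa⁴/(32b³) + 15πa⁶/(256b⁵) + O(a⁸)`. -/
theorem maclaurin_excess_expansion (b : ℝ) (hb : 0 < b)
    (f : ℝ → ℝ)
    (hf : ∀ a : ℝ, f a =
      Real.sqrt (a ^ 2 + b ^ 2) * ellipticE (a / Real.sqrt (a ^ 2 + b ^ 2))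
        - b ^ 2 / Real.sqrt (a ^ 2 + b ^ 2) * ellipticK (a / Real.sqrt (a ^ 2 + b ^ 2))) :
    (fun a : ℝ => f a -
        (π * a ^ 2 / (4 * b) - 3 * π * a ^ 4 / (32 * b ^ 3)
          + 15 * π * a ^ 6 / (256 * b ^ 5)))
      =O[nhdsWithin 0 (Set.Ioi 0)] fun a : ℝ => a ^ 8 := by
  refine isBigO_of_le' (c := 5 * π / (32 * b ^ 7)) _ fun a => ?_
  rw [hf a, Real.norm_eq_abs, Real.norm_of_nonneg (by positivity)]
  exact abs_limitExcess_sub_taylor_le hb a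
end

section
/- Let a ≥ b > 0 and set k = a/√(a² + b²). Then b − (1/(ab))·∫₀^{ab/√(a²+b²)} ((a² + b²)²x² − a²b²(a² − b²)) / √((a² + b²)²x⁴ − 2a²b²(a² − b²)x² + a⁴b⁴) dx = √(a² + b²)·E(k) − (b²/√(a² + b²))·K(k), where K(k) = ∫₀^{π/2} dθ/√(1 − k² sin²θ) and E(k) = ∫₀^{π/2} √(1 − k² sin²θ) dθ. -/
open Real

/-!
With `c = √(a² + b²)`, substitute `x = (ab/c) · sin θ / (1 + cos θ) = (ab/c) · tan (θ/2)`,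
whose derivative is `(ab/c) / (1 + cos θ)`. The quartic under the root becomes
`(2a²b² / (1 + cos θ))² · Δ²` with `Δ = √(1 - k² sin² θ)`, `k = a/c`, and the integrand becomes
`(ab³/c) / Δ - abc · cos θ / ((1 + cos θ) Δ)`. The first term gives `K(k)`. For the second,
`Δ - cos θ / ((1 + cos θ) Δ)` is the derivative of `sin θ · Δ / (1 + cos θ)`, which vanishes at `0`
and equals `√(1 - k²) = b/c` at `π/2`; so it integrates to `E(k) - b/c`.
-/

open Set intervalIntegral
open MeasureTheory (volume)
open scoped Interval

lemma one_add_cos_pos_of_mem_uIcc {θ : ℝ} (hθ : θ ∈ [[0, π / 2]]) : 0 < 1 + cos θ := by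
  rw [uIcc_of_le (by positivity)] at hθ
  linarith [cos_nonneg_of_mem_Icc ⟨by linarith [hθ.1, pi_pos], hθ.2⟩]

lemma hasDerivAt_sin_div_one_add_cos {θ : ℝ} (h : 0 < 1 + cos θ) :
    HasDerivAt (fun t => sin t / (1 + cos t)) (1 / (1 + cos θ)) θ := by
  refine ((hasDerivAt_sin θ).div ((hasDerivAt_cos θ).const_add 1) h.ne').congr_deriv ?_
  field_simp
  linear_combination sin_sq_add_cos_sq θ

lemma integral_eq_integral_sin_div_one_add_cos {g : ℝ → ℝ} (hg : Continuous g) (r : ℝ) :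
    ∫ x in (0:ℝ)..r, g x
      = ∫ θ in (0:ℝ)..(π / 2), g (r * (sin θ / (1 + cos θ))) * (r / (1 + cos θ)) := by
  have hderiv : ∀ θ ∈ [[0, π / 2]],
      HasDerivAt (fun t => r * (sin t / (1 + cos t))) (r / (1 + cos θ)) θ := fun θ hθ =>
    ((hasDerivAt_sin_div_one_add_cos (one_add_cos_pos_of_mem_uIcc hθ)).const_mul r).congr_deriv
      (mul_one_div r _)
  have hcont : ContinuousOn (fun θ => r / (1 + cos θ)) [[0, π / 2]] :=
    continuousOn_const.div (by fun_prop) fun θ hθ => (one_add_cos_pos_of_mem_uIcc hθ).ne'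
  have := integral_comp_mul_deriv hderiv hcont hg
  simp only [sin_zero, zero_div, mul_zero, sin_pi_div_two, cos_pi_div_two, add_zero, div_one,
    mul_one, Function.comp_def] at this
  exact this.symm

lemma hasDerivAt_sin_mul_sqrt_div_one_add_cos {k θ : ℝ} (hΔ : 0 < 1 - k ^ 2 * sin θ ^ 2)
    (hθ : 0 < 1 + cos θ) :
    HasDerivAt (fun t => sin t * √(1 - k ^ 2 * sin t ^ 2) / (1 + cos t))
      (√(1 - k ^ 2 * sin θ ^ 2) - cos θ / ((1 + cos θ) * √(1 - k ^ 2 * sin θ ^ 2))) θ := by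
  have hΔ' : HasDerivAt (fun t => 1 - k ^ 2 * sin t ^ 2)
      (-(k ^ 2 * (2 * sin θ * cos θ))) θ := by
    simpa using (((hasDerivAt_sin θ).pow 2).const_mul (k ^ 2)).const_sub 1
  have hsqrt := hΔ'.sqrt hΔ.ne'
  refine (((hasDerivAt_sin θ).mul hsqrt).div ((hasDerivAt_cos θ).const_add 1)
    hθ.ne').congr_deriv ?_
  simp only [Pi.mul_apply]
  have hw := sq_sqrt hΔ.le
  have hw0 := sqrt_pos.mpr hΔ
  set w := √(1 - k ^ 2 * sin θ ^ 2)
  field_simp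
  linear_combination (-cos θ * (1 + cos θ)) * hw + w ^ 2 * sin_sq_add_cos_sq θ

lemma one_sub_sq_mul_sin_sq_pos {k : ℝ} (hk : k ^ 2 < 1) (θ : ℝ) :
    0 < 1 - k ^ 2 * sin θ ^ 2 := by
  nlinarith [sin_sq_le_one θ, sq_nonneg k]

lemma continuousOn_cos_div_one_add_cos_mul_sqrt {k : ℝ} (hk : k ^ 2 < 1) :
    ContinuousOn (fun θ => cos θ / ((1 + cos θ) * √(1 - k ^ 2 * sin θ ^ 2))) [[0, π / 2]] :=
  continuousOn_cos.div (by fun_prop) fun θ hθ =>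
    mul_ne_zero (one_add_cos_pos_of_mem_uIcc hθ).ne'
      (sqrt_pos.mpr (one_sub_sq_mul_sin_sq_pos hk θ)).ne'

lemma integral_cos_div_one_add_cos_mul_sqrt {k : ℝ} (hk : k ^ 2 < 1) :
    ∫ θ in (0:ℝ)..(π / 2), cos θ / ((1 + cos θ) * √(1 - k ^ 2 * sin θ ^ 2))
      = ellipticE k - √(1 - k ^ 2) := by
  have hE : IntervalIntegrable (fun θ => √(1 - k ^ 2 * sin θ ^ 2)) volume 0 (π / 2) :=
    Continuous.intervalIntegrable (by fun_prop) _ _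
  have hJ := (continuousOn_cos_div_one_add_cos_mul_sqrt hk).intervalIntegrable (μ := volume)
  have hFTC := integral_eq_sub_of_hasDerivAt (fun θ hθ => hasDerivAt_sin_mul_sqrt_div_one_add_cos
    (one_sub_sq_mul_sin_sq_pos hk θ) (one_add_cos_pos_of_mem_uIcc hθ)) (hE.sub hJ)
  rw [integral_sub hE hJ] at hFTC
  simp only [sin_pi_div_two, cos_pi_div_two, sin_zero, one_pow, mul_one, add_zero, div_one,
    one_mul, zero_mul, zero_div, sub_zero] at hFTC
  rw [ellipticE]
  linarith

lemma continuous_residual_integrand {a b : ℝ} (ha : a ≠ 0) (hb : b ≠ 0) :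
    Continuous fun x : ℝ => ((a ^ 2 + b ^ 2) ^ 2 * x ^ 2 - a ^ 2 * b ^ 2 * (a ^ 2 - b ^ 2)) /
      √((a ^ 2 + b ^ 2) ^ 2 * x ^ 4 - 2 * a ^ 2 * b ^ 2 * (a ^ 2 - b ^ 2) * x ^ 2
        + a ^ 4 * b ^ 4) := by
  refine .div (by fun_prop) (by fun_prop) fun x => (sqrt_pos.mpr ?_).ne'
  have hsum : (a ^ 2 + b ^ 2) ^ 2 * x ^ 4 - 2 * a ^ 2 * b ^ 2 * (a ^ 2 - b ^ 2) * x ^ 2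
      + a ^ 4 * b ^ 4 = ((a ^ 2 + b ^ 2) * x ^ 2 - a ^ 2 * b ^ 2) ^ 2 + (2 * a * b ^ 2 * x) ^ 2 := by
    ring
  rw [hsum]
  rcases eq_or_ne x 0 with rfl | hx
  · simp only [ne_eq, OfNat.ofNat_ne_zero, not_false_eq_true, zero_pow, mul_zero, zero_sub,
      even_two, Even.neg_pow, add_zero]
    positivity
  · have : 0 < (2 * a * b ^ 2 * x) ^ 2 := by positivity
    positivity

lemma residual_comp_sin_div_one_add_cos {a b c : ℝ} (ha : a ≠ 0) (hb : b ≠ 0)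
    (hc : c ^ 2 = a ^ 2 + b ^ 2) {θ : ℝ} (hθ : 0 < 1 + cos θ) :
    ((a ^ 2 + b ^ 2) ^ 2 * (a * b / c * (sin θ / (1 + cos θ))) ^ 2
        - a ^ 2 * b ^ 2 * (a ^ 2 - b ^ 2)) /
      √((a ^ 2 + b ^ 2) ^ 2 * (a * b / c * (sin θ / (1 + cos θ))) ^ 4
        - 2 * a ^ 2 * b ^ 2 * (a ^ 2 - b ^ 2) * (a * b / c * (sin θ / (1 + cos θ))) ^ 2
        + a ^ 4 * b ^ 4) * (a * b / c / (1 + cos θ))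
    = a * b ^ 3 / c * (1 / √(1 - (a / c) ^ 2 * sin θ ^ 2))
      - a * b * c * (cos θ / ((1 + cos θ) * √(1 - (a / c) ^ 2 * sin θ ^ 2))) := by
  have hc0 : c ≠ 0 := by
    rintro rfl
    have : 0 < a ^ 2 + b ^ 2 := by positivity
    linarith
  have hsc := sin_sq_add_cos_sq θ
  have hΔ : 0 < 1 - (a / c) ^ 2 * sin θ ^ 2 := by
    rw [div_pow, ← mul_div_right_comm, one_sub_div (by positivity), hc]
    have : 0 < b ^ 2 := by positivity
    apply div_pos _ (by positivity)
    nlinarith [sin_sq_le_one θ, sq_nonneg a]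
  have hquartic : (a ^ 2 + b ^ 2) ^ 2 * (a * b / c * (sin θ / (1 + cos θ))) ^ 4
        - 2 * a ^ 2 * b ^ 2 * (a ^ 2 - b ^ 2) * (a * b / c * (sin θ / (1 + cos θ))) ^ 2
        + a ^ 4 * b ^ 4
      = (2 * a ^ 2 * b ^ 2 / (1 + cos θ)) ^ 2 * (1 - (a / c) ^ 2 * sin θ ^ 2) := by
    rw [← hc]
    field_simp
    linear_combination c ^ 2 * (sin θ ^ 2 + 4 * cos θ + cos θ ^ 2 + 3) * hsc
      - 2 * sin θ ^ 2 * (1 + cos θ) ^ 2 * hc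
  rw [hquartic, sqrt_mul (by positivity), sqrt_sq (by positivity)]
  set Δ := √(1 - (a / c) ^ 2 * sin θ ^ 2)
  have hΔ0 : 0 < Δ := sqrt_pos.mpr hΔ
  rw [← hc]
  field_simp
  linear_combination c ^ 2 * hsc + (1 + cos θ) ^ 2 * hc

/-- The limit hyperbolic excess in the asymptote-aligned form: `b` minus the
residual integral equals `√(a² + b²)·E(k) − (b²/√(a² + b²))·K(k)`. -/
theorem excess_asymptote_form (a b : ℝ) (hb : 0 < b) (hab : b ≤ a)
    (k : ℝ) (hk : k = a / Real.sqrt (a ^ 2 + b ^ 2)) :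
    b - (1 / (a * b)) *
      ∫ x in (0:ℝ)..(a * b / Real.sqrt (a ^ 2 + b ^ 2)),
        ((a ^ 2 + b ^ 2) ^ 2 * x ^ 2 - a ^ 2 * b ^ 2 * (a ^ 2 - b ^ 2)) /
          Real.sqrt ((a ^ 2 + b ^ 2) ^ 2 * x ^ 4
            - 2 * a ^ 2 * b ^ 2 * (a ^ 2 - b ^ 2) * x ^ 2 + a ^ 4 * b ^ 4)
      = Real.sqrt (a ^ 2 + b ^ 2) * ellipticE k
        - b ^ 2 / Real.sqrt (a ^ 2 + b ^ 2) * ellipticK k := by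
  have ha : 0 < a := hb.trans_le hab
  set c := √(a ^ 2 + b ^ 2)
  subst hk
  have hc : 0 < c := sqrt_pos.mpr (by positivity)
  have hc2 : c ^ 2 = a ^ 2 + b ^ 2 := sq_sqrt (by positivity)
  have hk1 : (a / c) ^ 2 < 1 := by
    rw [div_pow, hc2, div_lt_one (by positivity)]
    nlinarith
  have hsqrt : √(1 - (a / c) ^ 2) = b / c := by
    rw [← sqrt_sq (div_pos hb hc).le]
    congr 1
    field_simp
    linarith
  have hK : IntervalIntegrable (fun θ => 1 / √(1 - (a / c) ^ 2 * sin θ ^ 2)) volume 0 (π / 2) :=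
    Continuous.intervalIntegrable (continuous_const.div (by fun_prop) fun θ =>
      (sqrt_pos.mpr (one_sub_sq_mul_sin_sq_pos hk1 θ)).ne') _ _
  have hJ := (continuousOn_cos_div_one_add_cos_mul_sqrt hk1).intervalIntegrable (μ := volume)
  rw [integral_eq_integral_sin_div_one_add_cos (continuous_residual_integrand ha.ne' hb.ne'),
    integral_congr fun θ hθ =>
      residual_comp_sin_div_one_add_cos ha.ne' hb.ne' hc2 (one_add_cos_pos_of_mem_uIcc hθ),
    integral_sub (hK.const_mul _) (hJ.const_mul _), integral_const_mul, integral_const_mul,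
    ← ellipticK, integral_cos_div_one_add_cos_mul_sqrt hk1, hsqrt]
  field_simp
  ring
end

section
/- Let a ≥ b > 0 and set k = a/√(a² + b²). Then ∫₀^{ab/√(a²+b²)} (a² + b²)² x² / √((a² + b²)² x⁴ − 2a²b²(a² − b²) x² + a⁴b⁴) dx = (ab√(a² + b²)/2)·( K(k) − 2E(k) + 2b/√(a² + b²) ), where K(k) = ∫₀^{π/2} dθ/√(1 − k² sin²θ) and E(k) = ∫₀^{π/2} √(1 − k² sin²θ) dθ. -/
open Real

/-!
With `R φ = √(a² cos² φ + b²)` and `P = R + b sin φ`, the substitution `x = a b cos φ / P`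
maps `[0, π/2]` decreasingly onto `[0, ab/√(a²+b²)]` and rationalises the quartic: since
`P (R - b sin φ) = (a² + b²) cos² φ`, the quartic at `x` equals `(2 a² b³ / P)²`. The pulled-back
integrand `ab (a²+b²)² cos² φ / (2 R P²)` differs from `ab ((a²+b²)/(2R) - R + b sin φ)` by the
derivative of `ab (a²+b²) sin φ cos φ / P`, which vanishes at both ends, and
`R = √(a²+b²) · √(1 - k² sin² φ)` turns the remaining integrals into `K(k)` and `E(k)`.
-/

open Set intervalIntegral

namespace ExcessIntegral

noncomputable section

def quartic (a b x : ℝ) : ℝ :=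
  (a ^ 2 + b ^ 2) ^ 2 * x ^ 4 - 2 * a ^ 2 * b ^ 2 * (a ^ 2 - b ^ 2) * x ^ 2 + a ^ 4 * b ^ 4

def integrand (a b x : ℝ) : ℝ := (a ^ 2 + b ^ 2) ^ 2 * x ^ 2 / √(quartic a b x)

def root (a b φ : ℝ) : ℝ := √(a ^ 2 * cos φ ^ 2 + b ^ 2)

def denom (a b φ : ℝ) : ℝ := root a b φ + b * sin φ

def subst (a b φ : ℝ) : ℝ := a * b * cos φ / denom a b φ

def boundaryTerm (a b φ : ℝ) : ℝ := sin φ * cos φ / denom a b φ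

def pulledBack (a b φ : ℝ) : ℝ :=
  (a ^ 2 + b ^ 2) * cos φ ^ 2 / (2 * root a b φ * denom a b φ ^ 2)

end

variable {a b φ : ℝ}

lemma root_sq (a b φ : ℝ) : root a b φ ^ 2 = a ^ 2 * cos φ ^ 2 + b ^ 2 :=
  sq_sqrt (by positivity)

lemma root_pos (hb : b ≠ 0) (φ : ℝ) : 0 < root a b φ :=
  sqrt_pos.2 (by positivity)

@[fun_prop]
lemma continuous_root : Continuous (root a b) := by
  unfold root; fun_prop

@[fun_prop]
lemma continuous_denom : Continuous (denom a b) := by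
  unfold denom; fun_prop

lemma hasDerivAt_root (hb : b ≠ 0) (φ : ℝ) :
    HasDerivAt (root a b) (-(a ^ 2 * sin φ * cos φ) / root a b φ) φ := by
  have hX : 0 < a ^ 2 * cos φ ^ 2 + b ^ 2 := by positivity
  have h := ((((hasDerivAt_cos φ).fun_pow 2).const_mul (a ^ 2)).add_const (b ^ 2)).sqrt hX.ne'
  unfold root
  convert h using 1
  field_simp
  ring

lemma denom_pos (hb : 0 < b) (hs : 0 ≤ sin φ) : 0 < denom a b φ :=
  add_pos_of_pos_of_nonneg (root_pos hb.ne' φ) (mul_nonneg hb.le hs)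

lemma hasDerivAt_denom (hb : b ≠ 0) (φ : ℝ) :
    HasDerivAt (denom a b) (-(a ^ 2 * sin φ * cos φ) / root a b φ + b * cos φ) φ :=
  (hasDerivAt_root hb φ).add ((hasDerivAt_sin φ).const_mul b)

lemma denom_mul_root_sub (a b φ : ℝ) :
    denom a b φ * (root a b φ - b * sin φ) = (a ^ 2 + b ^ 2) * cos φ ^ 2 := by
  unfold denom
  linear_combination root_sq a b φ - b ^ 2 * sin_sq_add_cos_sq φ

lemma quartic_eq_sq_sub (a b x : ℝ) :
    quartic a b x = ((a ^ 2 + b ^ 2) * x ^ 2 + a ^ 2 * b ^ 2) ^ 2 - 4 * a ^ 4 * b ^ 2 * x ^ 2 := by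
  unfold quartic; ring

lemma quartic_subst (hP : denom a b φ ≠ 0) :
    quartic a b (subst a b φ) = (2 * a ^ 2 * b ^ 3 / denom a b φ) ^ 2 := by
  have h : (a ^ 2 + b ^ 2) * subst a b φ ^ 2 + a ^ 2 * b ^ 2
      = 2 * a ^ 2 * b ^ 2 * root a b φ / denom a b φ := by
    have hP' : denom a b φ = root a b φ + b * sin φ := rfl
    unfold subst
    field_simp
    linear_combination -a ^ 2 * b ^ 2 * denom_mul_root_sub a b φ
      + a ^ 2 * b ^ 2 * denom a b φ * hP'
  rw [quartic_eq_sq_sub, h]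
  unfold subst
  field_simp
  linear_combination 4 * a ^ 4 * b ^ 4 * root_sq a b φ

lemma hasDerivAt_subst (hb : b ≠ 0) (hP : denom a b φ ≠ 0) :
    HasDerivAt (subst a b) (-(a * b ^ 2) / (root a b φ * denom a b φ)) φ := by
  have hR := (root_pos (a := a) hb φ).ne'
  refine (((hasDerivAt_cos φ).const_mul (a * b)).fun_div (hasDerivAt_denom hb φ) hP).congr_deriv ?_
  unfold denom at hP ⊢
  field_simp
  linear_combination -a * sin φ * root_sq a b φ - a * b * root a b φ * sin_sq_add_cos_sq φ

lemma integrand_subst_mul_deriv (ha : a ≠ 0) (hb : 0 < b) (hP : 0 < denom a b φ) :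
    integrand a b (subst a b φ) * (-(a * b ^ 2) / (root a b φ * denom a b φ))
      = -(a * b * (a ^ 2 + b ^ 2) * pulledBack a b φ) := by
  have hR := (root_pos (a := a) hb.ne' φ).ne'
  rw [integrand, quartic_subst hP.ne', sqrt_sq (by positivity), pulledBack, subst]
  field_simp

lemma hasDerivAt_boundaryTerm (hb : b ≠ 0) (hP : denom a b φ ≠ 0) :
    HasDerivAt (boundaryTerm a b)
      (pulledBack a b φ - 1 / root a b φ / 2 + (root a b φ - b * sin φ) / (a ^ 2 + b ^ 2)) φ := by
  have hR := (root_pos (a := a) hb φ).ne'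
  have hc : a ^ 2 + b ^ 2 ≠ 0 := by positivity
  refine (((hasDerivAt_sin φ).fun_mul (hasDerivAt_cos φ)).fun_div (hasDerivAt_denom hb φ)
    hP).congr_deriv ?_
  unfold denom at hP
  unfold pulledBack denom
  have hP2 : root a b φ + sin φ * b ≠ 0 := by rwa [mul_comm]
  field_simp
  linear_combination (a ^ 2 - b ^ 2 - 2 * root a b φ ^ 2 - 2 * b * root a b φ * sin φ
      - 2 * a ^ 2 * sin φ ^ 2 + 2 * b ^ 2 * cos φ ^ 2) * root_sq a b φ
    + b * (b ^ 3 - a ^ 2 * b - 2 * a ^ 2 * root a b φ * sin φ + 2 * a ^ 2 * b * cos φ ^ 2)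
      * sin_sq_add_cos_sq φ

lemma sin_nonneg_of_mem_uIcc (hφ : φ ∈ uIcc 0 (π / 2)) : 0 ≤ sin φ := by
  rw [uIcc_of_le (by positivity)] at hφ
  exact sin_nonneg_of_nonneg_of_le_pi hφ.1 (hφ.2.trans (by linarith [pi_pos]))

lemma integral_pulledBack (hb : 0 < b) :
    ∫ φ in 0..π / 2, pulledBack a b φ
      = (∫ φ in 0..π / 2, 1 / root a b φ) / 2 - (∫ φ in 0..π / 2, root a b φ) / (a ^ 2 + b ^ 2)
        + b / (a ^ 2 + b ^ 2) := by
  have hR := root_pos (a := a) hb.ne'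
  have hP φ (hφ : φ ∈ uIcc 0 (π / 2)) : 0 < denom a b φ :=
    denom_pos hb (sin_nonneg_of_mem_uIcc hφ)
  have hpb : IntervalIntegrable (pulledBack a b) MeasureTheory.volume 0 (π / 2) := by
    refine ContinuousOn.intervalIntegrable fun φ hφ ↦ ContinuousAt.continuousWithinAt ?_
    have h := mul_ne_zero (mul_ne_zero two_ne_zero (hR φ).ne') (pow_ne_zero 2 (hP φ hφ).ne')
    unfold pulledBack
    fun_prop (disch := exact h)
  have hinv : IntervalIntegrable (fun φ ↦ 1 / root a b φ) MeasureTheory.volume 0 (π / 2) :=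
    (continuous_const.div continuous_root fun φ ↦ (hR φ).ne').intervalIntegrable _ _
  have hroot : IntervalIntegrable (root a b) MeasureTheory.volume 0 (π / 2) :=
    continuous_root.intervalIntegrable _ _
  have hsin : IntervalIntegrable (fun φ ↦ b * sin φ) MeasureTheory.volume 0 (π / 2) :=
    (continuous_const.mul continuous_sin).intervalIntegrable _ _
  have hFTC := integral_eq_sub_of_hasDerivAt
    (fun φ hφ ↦ hasDerivAt_boundaryTerm hb.ne' (hP φ hφ).ne')
    ((hpb.sub (hinv.div_const 2)).add ((hroot.sub hsin).div_const _))
  rw [integral_add (hpb.sub (hinv.div_const 2)) ((hroot.sub hsin).div_const _),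
    integral_sub hpb (hinv.div_const 2), integral_div, integral_div, integral_sub hroot hsin,
    integral_const_mul, integral_sin] at hFTC
  simp only [boundaryTerm, sin_zero, cos_pi_div_two, cos_zero, zero_mul, mul_zero, zero_div] at hFTC
  have hc : 0 < a ^ 2 + b ^ 2 := by positivity
  field_simp at hFTC ⊢
  linarith

lemma integral_integrand (ha : 0 < a) (hb : 0 < b) :
    ∫ x in 0..a * b / √(a ^ 2 + b ^ 2), integrand a b x
      = a * b * (a ^ 2 + b ^ 2) * ∫ φ in 0..π / 2, pulledBack a b φ := by
  have hR := root_pos (a := a) hb.ne'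
  have hP φ (hφ : φ ∈ uIcc 0 (π / 2)) : 0 < denom a b φ :=
    denom_pos hb (sin_nonneg_of_mem_uIcc hφ)
  have hderiv φ (hφ : φ ∈ uIcc 0 (π / 2)) :
      HasDerivAt (subst a b) (-(a * b ^ 2) / (root a b φ * denom a b φ)) φ :=
    hasDerivAt_subst hb.ne' (hP φ hφ).ne'
  have hchange := integral_comp_mul_deriv_of_deriv_nonpos (g := integrand a b)
    (fun φ hφ ↦ (hderiv φ hφ).continuousAt.continuousWithinAt)
    (fun φ hφ ↦ hderiv φ (Ioo_subset_Icc_self hφ))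
    (fun φ hφ ↦ div_nonpos_of_nonpos_of_nonneg (neg_nonpos.2 (by positivity))
      (mul_pos (hR φ) (hP φ (Ioo_subset_Icc_self hφ))).le)
  have hsubst_zero : subst a b 0 = a * b / √(a ^ 2 + b ^ 2) := by simp [subst, denom, root]
  have hsubst_pi_div_two : subst a b (π / 2) = 0 := by simp [subst]
  simp only [Function.comp_apply] at hchange
  rw [integral_congr fun φ hφ ↦ integrand_subst_mul_deriv ha.ne' hb (hP φ hφ), integral_neg,
    integral_const_mul, hsubst_zero, hsubst_pi_div_two, integral_symm 0] at hchange
  linarith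

lemma sqrt_one_sub_sq_mul_sin_sq (hb : b ≠ 0) (φ : ℝ) :
    √(1 - (a / √(a ^ 2 + b ^ 2)) ^ 2 * sin φ ^ 2) = root a b φ / √(a ^ 2 + b ^ 2) := by
  have hc : 0 < a ^ 2 + b ^ 2 := by positivity
  rw [root, ← sqrt_div' _ hc.le, div_pow, sq_sqrt hc.le]
  congr 1
  field_simp
  linear_combination -a ^ 2 * sin_sq_add_cos_sq φ

lemma ellipticK_div_sqrt (hb : b ≠ 0) :
    ellipticK (a / √(a ^ 2 + b ^ 2)) = √(a ^ 2 + b ^ 2) * ∫ φ in 0..π / 2, 1 / root a b φ := by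
  simp only [ellipticK, sqrt_one_sub_sq_mul_sin_sq hb, one_div_div, ← integral_const_mul,
    mul_one_div]

lemma ellipticE_div_sqrt (hb : b ≠ 0) :
    ellipticE (a / √(a ^ 2 + b ^ 2)) = (∫ φ in 0..π / 2, root a b φ) / √(a ^ 2 + b ^ 2) := by
  simp only [ellipticE, sqrt_one_sub_sq_mul_sin_sq hb, integral_div]

end ExcessIntegral

open ExcessIntegral

/-- Evaluation of the elliptic integral `𝓔₁` arising in the computation of the
limit hyperbolic excess. -/
theorem excess_integral_E1 (a b : ℝ) (hb : 0 < b) (hab : b ≤ a)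
    (k : ℝ) (hk : k = a / Real.sqrt (a ^ 2 + b ^ 2)) :
    ∫ x in (0:ℝ)..(a * b / Real.sqrt (a ^ 2 + b ^ 2)),
        (a ^ 2 + b ^ 2) ^ 2 * x ^ 2 /
          Real.sqrt ((a ^ 2 + b ^ 2) ^ 2 * x ^ 4
            - 2 * a ^ 2 * b ^ 2 * (a ^ 2 - b ^ 2) * x ^ 2 + a ^ 4 * b ^ 4)
      = a * b * Real.sqrt (a ^ 2 + b ^ 2) / 2 *
          (ellipticK k - 2 * ellipticE k + 2 * b / Real.sqrt (a ^ 2 + b ^ 2)) := by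
  subst hk
  have hc : 0 < √(a ^ 2 + b ^ 2) := sqrt_pos.2 (by positivity)
  calc _ = a * b * (a ^ 2 + b ^ 2) * ∫ φ in 0..π / 2, pulledBack a b φ :=
        integral_integrand (hb.trans_le hab) hb
    _ = _ := by
      rw [integral_pulledBack hb, ellipticK_div_sqrt hb.ne', ellipticE_div_sqrt hb.ne']
      field_simp
      rw [sq_sqrt (by positivity)]
      ring
end

section
/- Let a ≥ b > 0 and set k = a/√(a² + b²). Then ∫₀^{ab/√(a²+b²)} a²b²(a² − b²) / √((a² + b²)² x⁴ − 2a²b²(a² − b²) x² + a⁴b⁴) dx = (ab(a² − b²)/(2√(a² + b²)))·K(k), where K(k) = ∫₀^{π/2} dθ/√(1 − k² sin²θ). -/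
/-!
Scaling `x = a b t / √(a² + b²)` turns the quartic under the root into
`(a² b²)² ((1 + t²)² - 4 k² t²)`, so the integral is a multiple of
`∫₀¹ dt / √((1 + t²)² - 4 k² t²)`. The half-angle substitution `t = tan (θ / 2)`, under which
`sin θ = 2 t / (1 + t²)` and `dt = (1 + t²) dθ / 2`, identifies the latter with `K(k) / 2`.
-/

open Real

lemma continuous_inv_sqrt_one_sub_sq_mul_sin_sq {k : ℝ} (hk : k ^ 2 < 1) :
    Continuous fun θ : ℝ => 1 / √(1 - k ^ 2 * sin θ ^ 2) := by
  refine continuous_const.div (by fun_prop) fun θ => (sqrt_pos.mpr ?_).ne'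
  nlinarith [sin_sq_le_one θ, sq_nonneg k, sq_nonneg (sin θ)]

lemma sqrt_one_add_sq_sq_sub_eq_mul_sqrt (k t : ℝ) :
    √((1 + t ^ 2) ^ 2 - 4 * k ^ 2 * t ^ 2)
      = (1 + t ^ 2) * √(1 - k ^ 2 * sin (2 * arctan t) ^ 2) := by
  have ht : 0 < 1 + t ^ 2 := by positivity
  have hsin : sin (2 * arctan t) = 2 * t / (1 + t ^ 2) := by
    rw [sin_eq_two_mul_tan_half_div_one_add_tan_half_sq, mul_div_cancel_left₀ _ two_ne_zero,
      tan_arctan]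
  have hfactor : (1 + t ^ 2) ^ 2 - 4 * k ^ 2 * t ^ 2
      = (1 + t ^ 2) ^ 2 * (1 - k ^ 2 * (2 * t / (1 + t ^ 2)) ^ 2) := by
    field_simp
    ring
  rw [hfactor, sqrt_mul (sq_nonneg _), sqrt_sq ht.le, hsin]

theorem ellipticK_eq_two_mul_integral {k : ℝ} (hk : k ^ 2 < 1) :
    ellipticK k = 2 * ∫ t in (0:ℝ)..1, 1 / √((1 + t ^ 2) ^ 2 - 4 * k ^ 2 * t ^ 2) := by
  have hderiv : ∀ t ∈ Set.uIcc (0:ℝ) 1,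
      HasDerivAt (fun t => 2 * arctan t) (2 * (1 / (1 + t ^ 2))) t :=
    fun t _ => (hasDerivAt_arctan t).const_mul 2
  have hcont : Continuous fun t : ℝ => 2 * (1 / (1 + t ^ 2)) :=
    continuous_const.mul (continuous_const.div (by fun_prop) fun t => by positivity)
  have hsub := intervalIntegral.integral_deriv_smul_comp hderiv hcont.continuousOn
    (continuous_inv_sqrt_one_sub_sq_mul_sin_sq hk)
  rw [arctan_zero, arctan_one, mul_zero,
    show 2 * (π / 4) = π / 2 by ring] at hsub
  rw [ellipticK, ← hsub, ← intervalIntegral.integral_const_mul]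
  refine intervalIntegral.integral_congr fun t _ => ?_
  simp only [smul_eq_mul, Function.comp_apply, sqrt_one_add_sq_sq_sub_eq_mul_sqrt]
  field_simp

lemma intervalIntegral_zero_eq_mul_integral_comp_mul (f : ℝ → ℝ) (s : ℝ) :
    ∫ x in (0:ℝ)..s, f x = s * ∫ t in (0:ℝ)..1, f (s * t) := by
  have h := intervalIntegral.smul_integral_comp_mul_left f s (a := 0) (b := 1)
  rwa [mul_zero, mul_one, smul_eq_mul, eq_comm] at h

lemma excess_integrand_comp_mul_eq {a b : ℝ} (ha : a ≠ 0) (hb : b ≠ 0) (t : ℝ) :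
    a ^ 2 * b ^ 2 * (a ^ 2 - b ^ 2) / √((a ^ 2 + b ^ 2) ^ 2 * (a * b / √(a ^ 2 + b ^ 2) * t) ^ 4
        - 2 * a ^ 2 * b ^ 2 * (a ^ 2 - b ^ 2) * (a * b / √(a ^ 2 + b ^ 2) * t) ^ 2 + a ^ 4 * b ^ 4)
      = (a ^ 2 - b ^ 2) *
          (1 / √((1 + t ^ 2) ^ 2 - 4 * (a / √(a ^ 2 + b ^ 2)) ^ 2 * t ^ 2)) := by
  have hsum : 0 < a ^ 2 + b ^ 2 := by positivity
  have hc : √(a ^ 2 + b ^ 2) ^ 2 = a ^ 2 + b ^ 2 := sq_sqrt hsum.le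
  have hc4 : √(a ^ 2 + b ^ 2) ^ 4 = (a ^ 2 + b ^ 2) ^ 2 := by
    rw [show √(a ^ 2 + b ^ 2) ^ 4 = (√(a ^ 2 + b ^ 2) ^ 2) ^ 2 by ring, hc]
  have hquartic : (a ^ 2 + b ^ 2) ^ 2 * (a * b / √(a ^ 2 + b ^ 2) * t) ^ 4
        - 2 * a ^ 2 * b ^ 2 * (a ^ 2 - b ^ 2) * (a * b / √(a ^ 2 + b ^ 2) * t) ^ 2
        + a ^ 4 * b ^ 4
      = (a ^ 2 * b ^ 2) ^ 2 *
          ((1 + t ^ 2) ^ 2 - 4 * (a / √(a ^ 2 + b ^ 2)) ^ 2 * t ^ 2) := by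
    simp only [mul_pow, div_pow, hc, hc4]
    field_simp
    ring
  have hab : a ^ 2 * b ^ 2 ≠ 0 := by positivity
  rw [hquartic, sqrt_mul (sq_nonneg _), sqrt_sq (by positivity), ← div_div,
    mul_div_cancel_left₀ _ hab, mul_one_div]

/-- Evaluation of the elliptic integral `𝓔₂` (up to sign) arising in the
computation of the limit hyperbolic excess. -/
theorem excess_integral_E2 (a b : ℝ) (hb : 0 < b) (hab : b ≤ a)
    (k : ℝ) (hk : k = a / Real.sqrt (a ^ 2 + b ^ 2)) :
    ∫ x in (0:ℝ)..(a * b / Real.sqrt (a ^ 2 + b ^ 2)),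
        a ^ 2 * b ^ 2 * (a ^ 2 - b ^ 2) /
          Real.sqrt ((a ^ 2 + b ^ 2) ^ 2 * x ^ 4
            - 2 * a ^ 2 * b ^ 2 * (a ^ 2 - b ^ 2) * x ^ 2 + a ^ 4 * b ^ 4)
      = a * b * (a ^ 2 - b ^ 2) / (2 * Real.sqrt (a ^ 2 + b ^ 2)) * ellipticK k := by
  have ha : 0 < a := hb.trans_le hab
  have hsum : 0 < a ^ 2 + b ^ 2 := by positivity
  have hk1 : k ^ 2 < 1 := by
    rw [hk, div_pow, sq_sqrt hsum.le, div_lt_one hsum]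
    nlinarith
  rw [intervalIntegral_zero_eq_mul_integral_comp_mul, ellipticK_eq_two_mul_integral hk1]
  simp only [excess_integrand_comp_mul_eq ha.ne' hb.ne', ← hk, intervalIntegral.integral_const_mul]
  generalize (∫ t in (0:ℝ)..1, 1 / √((1 + t ^ 2) ^ 2 - 4 * k ^ 2 * t ^ 2)) = I
  field_simp
end

section
/- Let 0 < q₁ ≤ p₁, and set p = p₁ + √(p₁² − q₁²) and q = p₁ − √(p₁² − q₁²). Then for every real y, (p² p₁² y⁴ − (p² + q₁²) y² + 1)·(q² p₁² y⁴ − (q² + q₁²) y² + 1) = (p₁² q₁² y⁴ − 2 p₁² y² + 1)². -/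
/-- The algebraic identity at the heart of Lagrange's arithmetic–geometric
transformation of the elliptic differential: the two quartic factors multiply to
a perfect square. -/
theorem lagrange_quartic_identity (p₁ q₁ : ℝ) (hq : 0 < q₁) (hpq : q₁ ≤ p₁)
    (p q : ℝ)
    (hp : p = p₁ + Real.sqrt (p₁ ^ 2 - q₁ ^ 2))
    (hq' : q = p₁ - Real.sqrt (p₁ ^ 2 - q₁ ^ 2)) :
    ∀ y : ℝ,
      (p ^ 2 * p₁ ^ 2 * y ^ 4 - (p ^ 2 + q₁ ^ 2) * y ^ 2 + 1) *
        (q ^ 2 * p₁ ^ 2 * y ^ 4 - (q ^ 2 + q₁ ^ 2) * y ^ 2 + 1)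
      = (p₁ ^ 2 * q₁ ^ 2 * y ^ 4 - 2 * p₁ ^ 2 * y ^ 2 + 1) ^ 2 := by
  intro y
  have hnn : (0:ℝ) ≤ p₁ ^ 2 - q₁ ^ 2 := by nlinarith
  have hs : Real.sqrt (p₁ ^ 2 - q₁ ^ 2) ^ 2 = p₁ ^ 2 - q₁ ^ 2 := Real.sq_sqrt hnn
  have h4 : Real.sqrt (p₁ ^ 2 - q₁ ^ 2) ^ 4 = (p₁ ^ 2 - q₁ ^ 2) ^ 2 := by
    rw [show Real.sqrt (p₁ ^ 2 - q₁ ^ 2) ^ 4 = (Real.sqrt (p₁ ^ 2 - q₁ ^ 2) ^ 2) ^ 2 by ring, hs]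
  subst hp hq'
  linear_combination ((-4 * p₁ ^ 2 * (p₁ ^ 2 * y ^ 4 - y ^ 2) ^ 2)
      + (4 * p₁ ^ 2 * y ^ 4 - 2 * p₁ ^ 2 * q₁ ^ 2 * y ^ 6 - 4 * p₁ ^ 4 * y ^ 6
        + 2 * p₁ ^ 6 * y ^ 8 - 2 * y ^ 2 + 2 * q₁ ^ 2 * y ^ 4)) * hs
    + ((p₁ ^ 2 * y ^ 4 - y ^ 2) ^ 2) * h4
end

section
/- Let 0 < q < p and let 0 < x ≤ 1/p. Set p₁ = (p + q)/2, q₁ = √(pq), and s(x, p, q) = (√2/(p + q))·√( 1 + pq x² − √((1 − p²x²)(1 − q²x²)) ). Then ∫₀^x dy / √((1 − p²y²)(1 − q²y²)) = ∫₀^{s(x,p,q)} dy / √((1 − p₁²y²)(1 − q₁²y²)). -/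
/-!
Substitute backwards, along the Landen map `φ(y) = y √(1 - p₁²y²) / √(1 - q₁²y²)`. Since `p`
and `q` are the roots of `X² - 2p₁X + q₁²`, one has `1 - p²φ² = (1 - pp₁y²)² / (1 - q₁²y²)` and
likewise for `q`, while `φ' = (1 - pp₁y²)(1 - qp₁y²) / (√(1 - p₁²y²) (1 - q₁²y²)^(3/2))`. Hence
`φ` pulls `dy / √((1 - p²y²)(1 - q²y²))` back to `dy / √((1 - p₁²y²)(1 - q₁²y²))` wherever
`pp₁y² < 1`. The upper limit `s` solves `φ(s) = x` and satisfies `pp₁s² ≤ 1`, so `φ` increases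
from `0` to `x` on `[0, s]`, and the change of variables for monotone maps needs no integrability
of the integrand, which is singular at `1/p`.
-/

open Real Set intervalIntegral

noncomputable def ellipticIntegrand (p q y : ℝ) : ℝ :=
  1 / √((1 - p ^ 2 * y ^ 2) * (1 - q ^ 2 * y ^ 2))

noncomputable def landenMap (a b y : ℝ) : ℝ := y * √(1 - a ^ 2 * y ^ 2) / √(1 - b ^ 2 * y ^ 2)

noncomputable def landenMapDeriv (a b y : ℝ) : ℝ :=
  (1 - 2 * a ^ 2 * y ^ 2 + a ^ 2 * b ^ 2 * y ^ 4) /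
    (√(1 - a ^ 2 * y ^ 2) * √(1 - b ^ 2 * y ^ 2) ^ 3)

section LandenMap

variable {a b y : ℝ}

theorem hasDerivAt_landenMap (hA : 0 < 1 - a ^ 2 * y ^ 2) (hB : 0 < 1 - b ^ 2 * y ^ 2) :
    HasDerivAt (landenMap a b) (landenMapDeriv a b y) y := by
  have hsq {c : ℝ} (hc : 0 < 1 - c ^ 2 * y ^ 2) :
      HasDerivAt (fun t => √(1 - c ^ 2 * t ^ 2)) (-(c ^ 2 * y) / √(1 - c ^ 2 * y ^ 2)) y := by
    convert (((hasDerivAt_pow 2 y).const_mul (c ^ 2)).const_sub 1).sqrt hc.ne' using 1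
    field_simp
    ring
  have h := ((hasDerivAt_id y).mul (hsq hA)).div (hsq hB) (sqrt_pos.2 hB).ne'
  refine h.congr_deriv ?_
  have hA' := sq_sqrt hA.le
  have hB' := sq_sqrt hB.le
  have hA₀ := sqrt_pos.2 hA
  have hB₀ := sqrt_pos.2 hB
  unfold landenMapDeriv
  simp only [id, Pi.mul_apply]
  set A := √(1 - a ^ 2 * y ^ 2)
  set B := √(1 - b ^ 2 * y ^ 2)
  field_simp
  linear_combination (B ^ 2 + y ^ 2 * b ^ 2) * hA' + (1 - 2 * a ^ 2 * y ^ 2) * hB'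

theorem landenMap_sq (hA : 0 ≤ 1 - a ^ 2 * y ^ 2) (hB : 0 ≤ 1 - b ^ 2 * y ^ 2) :
    landenMap a b y ^ 2 = y ^ 2 * (1 - a ^ 2 * y ^ 2) / (1 - b ^ 2 * y ^ 2) := by
  rw [landenMap, div_pow, mul_pow, sq_sqrt hA, sq_sqrt hB]

theorem one_sub_sq_mul_landenMap_sq {p : ℝ} (hp : p ^ 2 + b ^ 2 = 2 * p * a)
    (hA : 0 ≤ 1 - a ^ 2 * y ^ 2) (hB : 0 < 1 - b ^ 2 * y ^ 2) :
    1 - p ^ 2 * landenMap a b y ^ 2 = (1 - p * a * y ^ 2) ^ 2 / (1 - b ^ 2 * y ^ 2) := by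
  rw [landenMap_sq hA hB.le, eq_div_iff hB.ne', sub_mul, mul_div_assoc', div_mul_cancel₀ _ hB.ne']
  linear_combination (-y ^ 2) * hp

theorem one_sub_mul_sq_mul_one_sub_mul_sq {p q : ℝ} (hsum : p + q = 2 * a)
    (hprod : p * q = b ^ 2) :
    (1 - p * a * y ^ 2) * (1 - q * a * y ^ 2) = 1 - 2 * a ^ 2 * y ^ 2 + a ^ 2 * b ^ 2 * y ^ 4 := by
  linear_combination (-a * y ^ 2) * hsum + a ^ 2 * y ^ 4 * hprod

theorem one_sub_mul_sq_mul_one_sub_mul_sq_pos {p q : ℝ} (hqp : q ≤ p) (ha : 0 ≤ a)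
    (hy : p * a * y ^ 2 < 1) : 0 < (1 - p * a * y ^ 2) * (1 - q * a * y ^ 2) := by
  have hay : 0 ≤ a * y ^ 2 := mul_nonneg ha (sq_nonneg y)
  apply mul_pos <;> nlinarith

theorem ellipticIntegrand_landenMap_mul_landenMapDeriv {p q : ℝ} (hsum : p + q = 2 * a)
    (hprod : p * q = b ^ 2) (hA : 0 < 1 - a ^ 2 * y ^ 2) (hB : 0 < 1 - b ^ 2 * y ^ 2)
    (hN : 0 < (1 - p * a * y ^ 2) * (1 - q * a * y ^ 2)) :
    ellipticIntegrand p q (landenMap a b y) * landenMapDeriv a b y = ellipticIntegrand a b y := by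
  have hp : p ^ 2 + b ^ 2 = 2 * p * a := by linear_combination p * hsum - hprod
  have hq : q ^ 2 + b ^ 2 = 2 * q * a := by linear_combination q * hsum - hprod
  have hN' := one_sub_mul_sq_mul_one_sub_mul_sq (y := y) hsum hprod
  have hprodφ : (1 - p ^ 2 * landenMap a b y ^ 2) * (1 - q ^ 2 * landenMap a b y ^ 2)
      = ((1 - p * a * y ^ 2) * (1 - q * a * y ^ 2) / (1 - b ^ 2 * y ^ 2)) ^ 2 := by
    rw [one_sub_sq_mul_landenMap_sq hp hA.le hB, one_sub_sq_mul_landenMap_sq hq hA.le hB]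
    ring
  rw [hN'] at hN hprodφ
  rw [ellipticIntegrand, hprodφ, sqrt_sq (div_pos hN hB).le, landenMapDeriv,
    ellipticIntegrand, sqrt_mul hA.le]
  have hA₀ := sqrt_pos.2 hA
  have hB₀ := sqrt_pos.2 hB
  have hB' := sq_sqrt hB.le
  set B := √(1 - b ^ 2 * y ^ 2)
  set N := 1 - 2 * a ^ 2 * y ^ 2 + a ^ 2 * b ^ 2 * y ^ 4
  field_simp
  rw [hB']

end LandenMap

noncomputable def landenUpperLimit (p q x : ℝ) : ℝ :=
  √2 / (p + q) * √(1 + p * q * x ^ 2 - √((1 - p ^ 2 * x ^ 2) * (1 - q ^ 2 * x ^ 2)))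

section UpperLimit

variable {p q x : ℝ}

theorem sq_landenUpperLimit (hq : 0 ≤ q) (hqp : q ≤ p) (hx : p ^ 2 * x ^ 2 ≤ 1) :
    landenUpperLimit p q x ^ 2
      = 2 * (1 + p * q * x ^ 2 - √((1 - p ^ 2 * x ^ 2) * (1 - q ^ 2 * x ^ 2))) / (p + q) ^ 2 := by
  have hqx : q ^ 2 * x ^ 2 ≤ 1 := by nlinarith [pow_le_pow_left₀ hq hqp 2, sq_nonneg x]
  have hR : √((1 - p ^ 2 * x ^ 2) * (1 - q ^ 2 * x ^ 2)) ≤ 1 :=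
    sqrt_le_one.2 <|
      mul_le_one₀ (by nlinarith [sq_nonneg x]) (by linarith) (by nlinarith [sq_nonneg x])
  have hU : 0 ≤ 1 + p * q * x ^ 2 - √((1 - p ^ 2 * x ^ 2) * (1 - q ^ 2 * x ^ 2)) := by
    nlinarith [mul_nonneg (mul_nonneg (hq.trans hqp) hq) (sq_nonneg x)]
  rw [landenUpperLimit, mul_pow, div_pow, sq_sqrt zero_le_two, sq_sqrt hU]
  ring

theorem mul_sq_landenUpperLimit_le (hq : 0 < q) (hqp : q < p) (hx : p ^ 2 * x ^ 2 ≤ 1) :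
    p * ((p + q) / 2) * landenUpperLimit p q x ^ 2 ≤ 1 := by
  rw [sq_landenUpperLimit hq.le hqp.le hx]
  have hR := sqrt_nonneg ((1 - p ^ 2 * x ^ 2) * (1 - q ^ 2 * x ^ 2))
  have hpq : 0 < p + q := by linarith
  rw [← sub_nonneg]
  field_simp
  nlinarith

end UpperLimit

section AGMStep

variable {p q a b : ℝ} (hq : 0 < q) (hqp : q < p) (hsum : p + q = 2 * a) (hprod : p * q = b ^ 2)
include hq hqp hsum hprod

theorem one_sub_sq_mul_sq_pos_of_mul_sq_le {y : ℝ} (hy : p * a * y ^ 2 ≤ 1) :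
    0 < 1 - a ^ 2 * y ^ 2 ∧ 0 < 1 - b ^ 2 * y ^ 2 := by
  have hay : 0 ≤ a * y ^ 2 := mul_nonneg (by linarith) (sq_nonneg y)
  constructor <;> nlinarith [mul_nonneg (mul_nonneg hq.le (sub_nonneg.2 hqp.le)) (sq_nonneg y)]

theorem hasDerivAt_landenMap_of_mul_sq_le {y : ℝ} (hy : p * a * y ^ 2 ≤ 1) :
    HasDerivAt (landenMap a b) (landenMapDeriv a b y) y :=
  hasDerivAt_landenMap (one_sub_sq_mul_sq_pos_of_mul_sq_le hq hqp hsum hprod hy).1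
    (one_sub_sq_mul_sq_pos_of_mul_sq_le hq hqp hsum hprod hy).2

theorem landenMapDeriv_pos {y : ℝ} (hy : p * a * y ^ 2 < 1) : 0 < landenMapDeriv a b y := by
  obtain ⟨hA, hB⟩ := one_sub_sq_mul_sq_pos_of_mul_sq_le hq hqp hsum hprod hy.le
  rw [landenMapDeriv, ← one_sub_mul_sq_mul_one_sub_mul_sq hsum hprod]
  have := one_sub_mul_sq_mul_one_sub_mul_sq_pos hqp.le (by linarith : 0 ≤ a) hy
  positivity

theorem ellipticIntegrand_landenMap_mul_landenMapDeriv_of_mul_sq_lt {y : ℝ}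
    (hy : p * a * y ^ 2 < 1) :
    ellipticIntegrand p q (landenMap a b y) * landenMapDeriv a b y = ellipticIntegrand a b y :=
  have hAB := one_sub_sq_mul_sq_pos_of_mul_sq_le hq hqp hsum hprod hy.le
  ellipticIntegrand_landenMap_mul_landenMapDeriv hsum hprod hAB.1 hAB.2
    (one_sub_mul_sq_mul_one_sub_mul_sq_pos hqp.le (by linarith) hy)

theorem landenMap_landenUpperLimit {x : ℝ} (hx0 : 0 ≤ x) (hx : p ^ 2 * x ^ 2 ≤ 1) :
    landenMap a b (landenUpperLimit p q x) = x := by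
  set s := landenUpperLimit p q x
  have ha : a = (p + q) / 2 := by linarith
  have hpq : 0 < p + q := by linarith
  obtain ⟨hA, hB⟩ := one_sub_sq_mul_sq_pos_of_mul_sq_le hq hqp hsum hprod
    (ha ▸ mul_sq_landenUpperLimit_le hq hqp hx)
  have hs0 : 0 ≤ s := by unfold s landenUpperLimit; positivity
  have hφ0 : 0 ≤ landenMap a b s := by unfold landenMap; positivity
  have hR := sq_sqrt (mul_nonneg (by nlinarith [sq_nonneg x] : 0 ≤ 1 - p ^ 2 * x ^ 2)
    (by nlinarith [pow_le_pow_left₀ hq.le hqp.le 2, sq_nonneg x] : 0 ≤ 1 - q ^ 2 * x ^ 2))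
  refine (sq_eq_sq₀ hφ0 hx0).1 ?_
  rw [landenMap_sq hA.le hB.le, div_eq_iff hB.ne', ← hprod, ha,
    sq_landenUpperLimit hq.le hqp.le hx]
  set R := √((1 - p ^ 2 * x ^ 2) * (1 - q ^ 2 * x ^ 2))
  field_simp
  linear_combination -hR

end AGMStep

/-- Lagrange's arithmetic–geometric-mean invariance of the first-kind elliptic
differential: one AGM step `p₁ = (p + q)/2`, `q₁ = √(pq)` together with the
change of variable leaves the integral invariant, the new upper limit being
`s(x, p, q)`. -/
theorem lagrange_agm_invariance (p q x : ℝ) (hq : 0 < q) (hqp : q < p)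
    (hx0 : 0 < x) (hx1 : x ≤ 1 / p)
    (p₁ q₁ s : ℝ)
    (hp₁ : p₁ = (p + q) / 2) (hq₁ : q₁ = Real.sqrt (p * q))
    (hs : s = Real.sqrt 2 / (p + q) *
      Real.sqrt (1 + p * q * x ^ 2
        - Real.sqrt ((1 - p ^ 2 * x ^ 2) * (1 - q ^ 2 * x ^ 2)))) :
    ∫ y in (0:ℝ)..x,
        1 / Real.sqrt ((1 - p ^ 2 * y ^ 2) * (1 - q ^ 2 * y ^ 2))
      = ∫ y in (0:ℝ)..s,
          1 / Real.sqrt ((1 - p₁ ^ 2 * y ^ 2) * (1 - q₁ ^ 2 * y ^ 2)) := by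
  have hp : 0 < p := hq.trans hqp
  have hp₁0 : 0 < p₁ := by linarith
  have hsum : p + q = 2 * p₁ := by rw [hp₁]; ring
  have hprod : p * q = q₁ ^ 2 := by rw [hq₁, sq_sqrt (mul_pos hp hq).le]
  have hx : p ^ 2 * x ^ 2 ≤ 1 := by
    rw [← mul_pow]
    exact pow_le_one₀ (by positivity) (by rwa [le_div_iff₀ hp, mul_comm] at hx1)
  replace hs : s = landenUpperLimit p q x := hs
  have hs0 : 0 ≤ s := by rw [hs, landenUpperLimit]; positivity
  have hsmax : p * p₁ * s ^ 2 ≤ 1 := hp₁ ▸ hs ▸ mul_sq_landenUpperLimit_le hq hqp hx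
  have hcont : ContinuousOn (landenMap p₁ q₁) (uIcc 0 s) := by
    rw [uIcc_of_le hs0]
    rintro y ⟨hy0, hys⟩
    exact (hasDerivAt_landenMap_of_mul_sq_le hq hqp hsum hprod
      (hsmax.trans' (by gcongr))).continuousAt.continuousWithinAt
  have hinterior : ∀ y ∈ Ioo (min 0 s) (max 0 s), p * p₁ * y ^ 2 < 1 := by
    rw [min_eq_left hs0, max_eq_right hs0]
    rintro y ⟨hy0, hys⟩
    exact hsmax.trans_lt' (by gcongr)
  change ∫ y in 0..x, ellipticIntegrand p q y = ∫ y in 0..s, ellipticIntegrand p₁ q₁ y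
  calc ∫ y in 0..x, ellipticIntegrand p q y
      = ∫ y in 0..s, (ellipticIntegrand p q ∘ landenMap p₁ q₁) y * landenMapDeriv p₁ q₁ y := by
        rw [integral_comp_mul_deriv_of_deriv_nonneg hcont
          (fun y hy => hasDerivAt_landenMap_of_mul_sq_le hq hqp hsum hprod (hinterior y hy).le)
          (fun y hy => (landenMapDeriv_pos hq hqp hsum hprod (hinterior y hy)).le),
          hs, landenMap_landenUpperLimit hq hqp hsum hprod hx0.le hx]
        simp [landenMap]
    -- only on the open interval: for `x = 1/p` both factors vanish at `y = s` (`1 / 0 = 0`)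
    _ = ∫ y in 0..s, ellipticIntegrand p₁ q₁ y := integral_congr_uIoo fun y hy =>
        ellipticIntegrand_landenMap_mul_landenMapDeriv_of_mul_sq_lt hq hqp hsum hprod
          (hinterior y hy)
end

section
/- Let 0 < k < 1 and 0 < u < 1, and set ŝ = √( (1 + k u² − √((1 − u²)(1 − k²u²))) / 2 ). Then 2ŝ√(1 − ŝ²) / (k + 1 − 2ŝ²) = u / √(1 − u²). Equivalently, if φ, φ̂ ∈ (0, π/2) are the amplitudes defined by sin φ = u and sin φ̂ = ŝ, then tan φ = sin(2φ̂) / (k + cos(2φ̂)). -/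
open Real

/-- Legendre's amplitude relation in the Lagrange–Legendre modular
transformation, both as an algebraic identity in `u` and `k` and in the
amplitude form `tan φ = sin(2φ̂)/(k + cos(2φ̂))`. -/
theorem legendre_amplitude_relation (k u : ℝ) (hk0 : 0 < k) (hk1 : k < 1)
    (hu0 : 0 < u) (hu1 : u < 1)
    (shat : ℝ)
    (hshat : shat = Real.sqrt ((1 + k * u ^ 2
      - Real.sqrt ((1 - u ^ 2) * (1 - k ^ 2 * u ^ 2))) / 2)) :
    2 * shat * Real.sqrt (1 - shat ^ 2) / (k + 1 - 2 * shat ^ 2)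
      = u / Real.sqrt (1 - u ^ 2) ∧
    ∀ φ φhat : ℝ, φ ∈ Set.Ioo 0 (π / 2) → φhat ∈ Set.Ioo 0 (π / 2) →
      Real.sin φ = u → Real.sin φhat = shat →
      Real.tan φ = Real.sin (2 * φhat) / (k + Real.cos (2 * φhat)) := by
  have hu2 : u ^ 2 < 1 := by nlinarith
  have hku2 : k ^ 2 * u ^ 2 < 1 := by nlinarith
  set R : ℝ := Real.sqrt ((1 - u ^ 2) * (1 - k ^ 2 * u ^ 2)) with hRdef
  have hR0 : 0 ≤ R := Real.sqrt_nonneg _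
  have hR2 : R ^ 2 = (1 - u ^ 2) * (1 - k ^ 2 * u ^ 2) :=
    Real.sq_sqrt (by nlinarith)
  have hR2lt : R ^ 2 < 1 := by
    rw [hR2]
    nlinarith [mul_pos hu0 hu0, mul_nonneg (mul_nonneg (sq_nonneg k) (sq_nonneg u))
      (le_of_lt (show (0:ℝ) < 1 - u ^ 2 by nlinarith))]
  have hR1 : R < 1 := by nlinarith
  have hs0 : 0 ≤ shat := hshat ▸ Real.sqrt_nonneg _
  have hs2 : shat ^ 2 = (1 + k * u ^ 2 - R) / 2 := by
    rw [hshat]; exact Real.sq_sqrt (by nlinarith)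
  have h1s : 0 < 1 - shat ^ 2 := by rw [hs2]; nlinarith
  have h1u : 0 < 1 - u ^ 2 := by nlinarith
  have hden : 0 < k + 1 - 2 * shat ^ 2 := by rw [hs2]; nlinarith
  set a : ℝ := Real.sqrt (1 - shat ^ 2) with hadef
  set b : ℝ := Real.sqrt (1 - u ^ 2) with hbdef
  have ha0 : 0 < a := Real.sqrt_pos.mpr h1s
  have hb0 : 0 < b := Real.sqrt_pos.mpr h1u
  have e1 : a ^ 2 = 1 - shat ^ 2 := Real.sq_sqrt h1s.le
  have e2 : b ^ 2 = 1 - u ^ 2 := Real.sq_sqrt h1u.le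
  have hsq : (2 * shat * a * b) ^ 2 = (u * (k + 1 - 2 * shat ^ 2)) ^ 2 := by
    linear_combination (4 * shat ^ 2 * b ^ 2) * e1
      + (4 * shat ^ 2 * (1 - shat ^ 2)) * e2
      + (-4 * shat ^ 2 + 2 * (1 + k * u ^ 2) + 2 * R) * hs2 - hR2
  have hT0 : 0 ≤ 2 * shat * a * b := by positivity
  have hS0 : 0 ≤ u * (k + 1 - 2 * shat ^ 2) := by positivity
  have hTS : 2 * shat * a * b = u * (k + 1 - 2 * shat ^ 2) := by
    rw [← Real.sqrt_sq hT0, ← Real.sqrt_sq hS0, hsq]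
  have hmain : 2 * shat * a / (k + 1 - 2 * shat ^ 2) = u / b := by
    field_simp
    linarith [hTS]
  refine ⟨hmain, ?_⟩
  intro φ φhat hφ hφhat hsφ hsφhat
  have hcosφ : Real.cos φ = b := by
    rw [hbdef, ← hsφ]
    rw [show (1 : ℝ) - Real.sin φ ^ 2 = Real.cos φ ^ 2 by
      have := Real.sin_sq_add_cos_sq φ; linarith]
    exact (Real.sqrt_sq (Real.cos_nonneg_of_mem_Icc
      ⟨by linarith [hφ.1, Real.pi_pos], hφ.2.le⟩)).symm
  have hcosφhat : Real.cos φhat = a := by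
    rw [hadef, ← hsφhat]
    rw [show (1 : ℝ) - Real.sin φhat ^ 2 = Real.cos φhat ^ 2 by
      have := Real.sin_sq_add_cos_sq φhat; linarith]
    exact (Real.sqrt_sq (Real.cos_nonneg_of_mem_Icc
      ⟨by linarith [hφhat.1, Real.pi_pos], hφhat.2.le⟩)).symm
  rw [Real.tan_eq_sin_div_cos, hsφ, hcosφ, Real.sin_two_mul, Real.cos_two_mul',
    hsφhat, hcosφhat,
    show k + (a ^ 2 - shat ^ 2) = k + 1 - 2 * shat ^ 2 from by rw [e1]; ring,
    hmain]
end

section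
/- Define sequences (pₙ), (qₙ) by p₀ = √2, q₀ = 1, pₙ₊₁ = (pₙ + qₙ)/2, qₙ₊₁ = √(pₙ·qₙ), and let M(1, √2) denote their common limit. Then the quarter-arclength integral of the lemniscate satisfies ∫₀¹ dt/√(1 − t⁴) = π / (2·M(1, √2)). -/
/-!
Write `I(a, b) = ∫₀^∞ dx / √((x² + a²)(x² + b²))`. Gauss's substitution `x ↦ (x − ab/x)/2` maps
`(0, ∞)` bijectively onto `ℝ` and turns `I((a + b)/2, √(ab))` into `I(a, b)`, so `I` is constant
along the AGM iteration. Since `π/(2a) ≤ I(a, b) ≤ π/(2b)` for `0 < b ≤ a`, passing to the limit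
gives `I(p₀, q₀) = π / (2 M(p₀, q₀))`. Finally `t = 1/√(1 + x²)` identifies `I(√2, 1)` with
`∫₀¹ dt / √(1 − t⁴)`.
-/

open Filter MeasureTheory Set Real
open scoped ENNReal Topology

theorem lintegral_comp_abs (g : ℝ → ℝ≥0∞) :
    ∫⁻ x, g |x| = 2 * ∫⁻ x in Ioi 0, g x := by
  have hpos : ∫⁻ x in Ioi 0, g |x| = ∫⁻ x in Ioi 0, g x :=
    setLIntegral_congr_fun measurableSet_Ioi fun x hx => by rw [abs_of_pos hx]
  have hneg : ∫⁻ x in Iic 0, g |x| = ∫⁻ x in Ioi 0, g x := by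
    rw [← setLIntegral_congr Iio_ae_eq_Iic, ← hpos]
    have := (Measure.measurePreserving_neg (volume : Measure ℝ)).setLIntegral_comp_preimage_emb
      measurableEmbedding_neg (fun x => g |x|) (Iio 0)
    simpa using this.symm
  rw [← lintegral_add_compl _ (measurableSet_Ioi (a := (0 : ℝ))), compl_Ioi, hpos, hneg, two_mul]

theorem lintegral_Ioi_inv_sq_add_sq {a : ℝ} (ha : 0 < a) :
    ∫⁻ x in Ioi 0, ENNReal.ofReal ((x ^ 2 + a ^ 2)⁻¹) = ENNReal.ofReal (π / (2 * a)) := by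
  have hscale := lintegral_image_eq_lintegral_abs_deriv_mul (measurableSet_Ioi (a := 0))
    (fun x _ => ((hasDerivAt_id' x).const_mul a).hasDerivWithinAt)
    (mul_right_injective₀ ha.ne').injOn fun x => ENNReal.ofReal ((x ^ 2 + a ^ 2)⁻¹)
  rw [image_const_mul_Ioi_zero ha] at hscale
  have hunit : ∫⁻ x in Ioi 0, ENNReal.ofReal ((1 + x ^ 2)⁻¹) = ENNReal.ofReal (π / 2) := by
    rw [← ofReal_integral_eq_lintegral_ofReal integrable_inv_one_add_sq.integrableOn
      (ae_of_all _ fun x => by positivity), integral_Ioi_inv_one_add_sq, arctan_zero, sub_zero]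
  rw [hscale]
  calc ∫⁻ x in Ioi 0, ENNReal.ofReal |a * 1| * ENNReal.ofReal (((a * x) ^ 2 + a ^ 2)⁻¹)
      = ∫⁻ x in Ioi 0, ENNReal.ofReal a⁻¹ * ENNReal.ofReal ((1 + x ^ 2)⁻¹) := by
        refine lintegral_congr fun x => ?_
        rw [← ENNReal.ofReal_mul (by positivity), ← ENNReal.ofReal_mul (by positivity)]
        congr 1
        rw [mul_one, abs_of_pos ha]
        field_simp
        ring
    _ = ENNReal.ofReal (π / (2 * a)) := by
        rw [lintegral_const_mul' _ _ ENNReal.ofReal_ne_top, hunit,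
          ← ENNReal.ofReal_mul (by positivity)]
        congr 1
        field_simp

noncomputable def agmIntegrand (a b x : ℝ) : ℝ := 1 / √((x ^ 2 + a ^ 2) * (x ^ 2 + b ^ 2))

/-- Valued in `ℝ≥0∞`, so that no integrability side conditions arise. -/
noncomputable def agmIntegral (a b : ℝ) : ℝ≥0∞ :=
  ∫⁻ x in Ioi 0, ENNReal.ofReal (agmIntegrand a b x)

theorem agmIntegrand_abs (a b x : ℝ) : agmIntegrand a b |x| = agmIntegrand a b x := by
  rw [agmIntegrand, sq_abs, agmIntegrand]

theorem inv_sq_add_sq_le_agmIntegrand {a b : ℝ} (hb : b ≠ 0) (hab : b ^ 2 ≤ a ^ 2) (x : ℝ) :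
    (x ^ 2 + a ^ 2)⁻¹ ≤ agmIntegrand a b x := by
  have hprod : (x ^ 2 + a ^ 2) * (x ^ 2 + b ^ 2) ≤ (x ^ 2 + a ^ 2) ^ 2 := by
    rw [sq (x ^ 2 + a ^ 2)]; gcongr
  have hb2 : 0 < b ^ 2 := sq_pos_of_ne_zero hb
  have hpos : 0 < (x ^ 2 + a ^ 2) * (x ^ 2 + b ^ 2) :=
    mul_pos (by linarith [sq_nonneg x]) (by linarith [sq_nonneg x])
  rw [agmIntegrand, one_div]
  exact inv_anti₀ (sqrt_pos.2 hpos) ((sqrt_le_sqrt hprod).trans_eq (sqrt_sq (by positivity)))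

theorem agmIntegrand_le_inv_sq_add_sq {a b : ℝ} (hab : b ^ 2 ≤ a ^ 2) (x : ℝ) :
    agmIntegrand a b x ≤ (x ^ 2 + b ^ 2)⁻¹ := by
  have hprod : (x ^ 2 + b ^ 2) ^ 2 ≤ (x ^ 2 + a ^ 2) * (x ^ 2 + b ^ 2) := by
    rw [sq (x ^ 2 + b ^ 2)]; gcongr
  rw [agmIntegrand, one_div]
  rcases (by positivity : 0 ≤ x ^ 2 + b ^ 2).eq_or_lt with h0 | hpos
  · rw [← h0]; simp
  exact inv_anti₀ hpos ((sqrt_sq hpos.le).symm.trans_le (sqrt_le_sqrt hprod))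

theorem le_agmIntegral {a b : ℝ} (hb : 0 < b) (hba : b ≤ a) :
    ENNReal.ofReal (π / (2 * a)) ≤ agmIntegral a b := by
  rw [← lintegral_Ioi_inv_sq_add_sq (hb.trans_le hba)]
  exact setLIntegral_mono' measurableSet_Ioi fun x _ => ENNReal.ofReal_le_ofReal <|
    inv_sq_add_sq_le_agmIntegrand hb.ne' (pow_le_pow_left₀ hb.le hba 2) x

theorem agmIntegral_le {a b : ℝ} (hb : 0 < b) (hba : b ≤ a) :
    agmIntegral a b ≤ ENNReal.ofReal (π / (2 * b)) := by
  rw [← lintegral_Ioi_inv_sq_add_sq hb]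
  exact setLIntegral_mono' measurableSet_Ioi fun x _ => ENNReal.ofReal_le_ofReal <|
    agmIntegrand_le_inv_sq_add_sq (pow_le_pow_left₀ hb.le hba 2) x

theorem hasDerivAt_half_sub_div (c : ℝ) {x : ℝ} (hx : x ≠ 0) :
    HasDerivAt (fun y => (y - c / y) / 2) ((x ^ 2 + c) / (2 * x ^ 2)) x := by
  refine (((hasDerivAt_id' x).sub ((hasDerivAt_const x c).div (hasDerivAt_id' x) hx)).div_const
    2).congr_deriv ?_
  field_simp
  ring

theorem strictMonoOn_half_sub_div {c : ℝ} (hc : 0 ≤ c) :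
    StrictMonoOn (fun y => (y - c / y) / 2) (Ioi 0) := by
  intro x hx y _ hxy
  have : c / y ≤ c / x := div_le_div_of_nonneg_left hc hx hxy.le
  dsimp only
  linarith

theorem image_half_sub_div_Ioi {c : ℝ} (hc : 0 < c) :
    (fun y => (y - c / y) / 2) '' Ioi 0 = univ := by
  refine eq_univ_of_forall fun t => ?_
  have hsq : √(t ^ 2 + c) ^ 2 = t ^ 2 + c := sq_sqrt (by positivity)
  have hlt : |t| < √(t ^ 2 + c) := by
    rw [← sqrt_sq_eq_abs]; exact sqrt_lt_sqrt (sq_nonneg t) (by linarith)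
  have hpos : 0 < t + √(t ^ 2 + c) := by linarith [neg_abs_le t]
  refine ⟨t + √(t ^ 2 + c), hpos, ?_⟩
  field_simp
  linear_combination hsq

theorem agmIntegrand_agm_half_sub_div {a b x : ℝ} (hab : 0 ≤ a * b) (hx : 0 < x) :
    (x ^ 2 + a * b) / (2 * x ^ 2) * agmIntegrand ((a + b) / 2) √(a * b) ((x - a * b / x) / 2) =
      2 * agmIntegrand a b x := by
  set S := √((x ^ 2 + a ^ 2) * (x ^ 2 + b ^ 2))
  have hS : 0 < S := sqrt_pos.2 (by positivity)
  have hS2 : S ^ 2 = (x ^ 2 + a ^ 2) * (x ^ 2 + b ^ 2) := sq_sqrt (by positivity)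
  have hprod : (((x - a * b / x) / 2) ^ 2 + ((a + b) / 2) ^ 2) *
      (((x - a * b / x) / 2) ^ 2 + √(a * b) ^ 2) = ((x ^ 2 + a * b) * S / (4 * x ^ 2)) ^ 2 := by
    rw [sq_sqrt hab, div_pow ((x ^ 2 + a * b) * S), mul_pow, hS2]
    field_simp
    ring
  rw [agmIntegrand, agmIntegrand, hprod, sqrt_sq (by positivity)]
  field_simp
  norm_num [S]

theorem agmIntegral_agm_step {a b : ℝ} (hab : 0 < a * b) :
    agmIntegral ((a + b) / 2) √(a * b) = agmIntegral a b := by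
  have hcov := lintegral_image_eq_lintegral_abs_deriv_mul measurableSet_Ioi
    (fun x hx => (hasDerivAt_half_sub_div (a * b) (ne_of_gt hx)).hasDerivWithinAt)
    (strictMonoOn_half_sub_div hab.le).injOn
    fun y => ENNReal.ofReal (agmIntegrand ((a + b) / 2) √(a * b) y)
  rw [image_half_sub_div_Ioi hab, Measure.restrict_univ] at hcov
  have hdouble : 2 * agmIntegral ((a + b) / 2) √(a * b) = 2 * agmIntegral a b := calc
    -- the substitution covers all of `ℝ`, where the even integrand is counted twice
    _ = ∫⁻ y, ENNReal.ofReal (agmIntegrand ((a + b) / 2) √(a * b) y) := by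
        simp only [agmIntegral, ← lintegral_comp_abs, agmIntegrand_abs]
    _ = ∫⁻ x in Ioi 0, 2 * ENNReal.ofReal (agmIntegrand a b x) := by
        rw [hcov]
        refine setLIntegral_congr_fun measurableSet_Ioi fun x hx => ?_
        have hderiv : 0 < (x ^ 2 + a * b) / (2 * x ^ 2) := by
          have : 0 < x := hx
          positivity
        rw [abs_of_pos hderiv, ← ENNReal.ofReal_mul hderiv.le,
          agmIntegrand_agm_half_sub_div hab.le hx, ENNReal.ofReal_mul zero_le_two,
          ENNReal.ofReal_ofNat]
    _ = 2 * agmIntegral a b := lintegral_const_mul' _ _ ENNReal.ofNat_ne_top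
  exact (ENNReal.mul_right_inj two_ne_zero ENNReal.ofNat_ne_top).1 hdouble

theorem hasDerivAt_inv_sqrt_one_add_sq (x : ℝ) :
    HasDerivAt (fun y => (√(1 + y ^ 2))⁻¹) (-(x / ((1 + x ^ 2) * √(1 + x ^ 2)))) x := by
  have hsqrt : HasDerivAt (fun y => √(1 + y ^ 2)) (x / √(1 + x ^ 2)) x := by
    convert ((hasDerivAt_pow 2 x).const_add 1).sqrt (by positivity) using 1
    field_simp
    norm_num [mul_comm]
  refine (hsqrt.inv (sqrt_pos.2 (by positivity)).ne').congr_deriv ?_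
  rw [sq_sqrt (by positivity)]
  field_simp

theorem strictAntiOn_inv_sqrt_one_add_sq :
    StrictAntiOn (fun y => (√(1 + y ^ 2))⁻¹) (Ici 0) := by
  intro x hx y hy hxy
  have hx' : 0 ≤ x := hx
  exact inv_strictAnti₀ (sqrt_pos.2 (by positivity)) (sqrt_lt_sqrt (by positivity) (by nlinarith))

theorem image_inv_sqrt_one_add_sq_Ioi :
    (fun y => (√(1 + y ^ 2))⁻¹) '' Ioi 0 = Ioo 0 1 := by
  apply subset_antisymm
  · rintro _ ⟨x, hx, rfl⟩
    have hx' : 0 < x := hx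
    refine ⟨by positivity, inv_lt_one_of_one_lt₀ ?_⟩
    rw [lt_sqrt zero_le_one]
    nlinarith
  · rintro t ⟨ht0, ht1⟩
    have ht2 : 0 < 1 - t ^ 2 := by nlinarith
    refine ⟨√(1 - t ^ 2) / t, div_pos (sqrt_pos.2 ht2) ht0, ?_⟩
    have h : 1 + (√(1 - t ^ 2) / t) ^ 2 = t⁻¹ ^ 2 := by
      rw [div_pow, sq_sqrt ht2.le]
      field_simp
      ring
    dsimp only
    rw [h, sqrt_sq (by positivity), inv_inv]

theorem mul_one_div_sqrt_one_sub_pow_four {x : ℝ} (hx : 0 < x) :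
    x / ((1 + x ^ 2) * √(1 + x ^ 2)) * (1 / √(1 - (√(1 + x ^ 2))⁻¹ ^ 4)) =
      agmIntegrand √2 1 x := by
  set u := √(1 + x ^ 2)
  have hu : 0 < u := sqrt_pos.2 (by positivity)
  have hu2 : u ^ 2 = 1 + x ^ 2 := sq_sqrt (by positivity)
  have hv2 : √(x ^ 2 + 2) ^ 2 = x ^ 2 + 2 := sq_sqrt (by positivity)
  have hquartic : 1 - u⁻¹ ^ 4 = (x * √(x ^ 2 + 2) / u ^ 2) ^ 2 := by
    rw [div_pow, mul_pow, hv2, hu2]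
    field_simp
    rw [show u ^ 4 = (u ^ 2) ^ 2 by ring, hu2]
    ring
  have hintegrand : agmIntegrand √2 1 x = 1 / (√(x ^ 2 + 2) * u) := by
    rw [agmIntegrand, sq_sqrt zero_le_two, one_pow, sqrt_mul (by positivity), add_comm (x ^ 2) 1]
  rw [hintegrand, hquartic, sqrt_sq (by positivity), hu2]
  field_simp

theorem agmIntegral_sqrt_two_one :
    agmIntegral √2 1 = ∫⁻ t in Ioo 0 1, ENNReal.ofReal (1 / √(1 - t ^ 4)) := by
  rw [← image_inv_sqrt_one_add_sq_Ioi, lintegral_image_eq_lintegral_abs_deriv_mul measurableSet_Ioi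
    (fun x _ => (hasDerivAt_inv_sqrt_one_add_sq x).hasDerivWithinAt)
    (strictAntiOn_inv_sqrt_one_add_sq.injOn.mono Ioi_subset_Ici_self)]
  refine setLIntegral_congr_fun measurableSet_Ioi fun x hx => ?_
  have hx' : 0 < x := hx
  rw [abs_neg, abs_of_pos (by positivity), ← ENNReal.ofReal_mul (by positivity),
    mul_one_div_sqrt_one_sub_pow_four hx']

theorem sqrt_mul_le_add_div_two {a b : ℝ} (ha : 0 ≤ a) (hb : 0 ≤ b) : √(a * b) ≤ (a + b) / 2 := by
  rw [sqrt_le_left (by positivity)]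
  nlinarith [sq_nonneg (a - b)]

section AGMSequence

variable {P Q : ℕ → ℝ} (hP : ∀ n, P (n + 1) = (P n + Q n) / 2)
  (hQ : ∀ n, Q (n + 1) = √(P n * Q n)) (hQ0 : 0 < Q 0) (hQP0 : Q 0 ≤ P 0)
include hP hQ hQ0 hQP0

theorem agm_pos_le (n : ℕ) : 0 < Q n ∧ Q n ≤ P n := by
  induction n with
  | zero => exact ⟨hQ0, hQP0⟩
  | succ n ih =>
    obtain ⟨hq, hqp⟩ := ih
    rw [hP, hQ]
    exact ⟨sqrt_pos.2 (mul_pos (hq.trans_le hqp) hq),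
      sqrt_mul_le_add_div_two (hq.le.trans hqp) hq.le⟩

theorem agm_snd_monotone : Monotone Q := by
  refine monotone_nat_of_le_succ fun n => ?_
  obtain ⟨hq, hqp⟩ := agm_pos_le hP hQ hQ0 hQP0 n
  rw [hQ]
  exact (sqrt_mul_self hq.le).symm.trans_le (sqrt_le_sqrt (mul_le_mul_of_nonneg_right hqp hq.le))

theorem agmIntegral_agm_seq (n : ℕ) :
    agmIntegral (P n) (Q n) = agmIntegral (P 0) (Q 0) := by
  induction n with
  | zero => rfl
  | succ n ih =>
    obtain ⟨hq, hqp⟩ := agm_pos_le hP hQ hQ0 hQP0 n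
    rw [hP, hQ, agmIntegral_agm_step (mul_pos (hq.trans_le hqp) hq), ih]

theorem agm_lim_pos {M : ℝ} (hQM : Tendsto Q atTop (𝓝 M)) : 0 < M :=
  hQ0.trans_le <| ge_of_tendsto' hQM fun n => agm_snd_monotone hP hQ hQ0 hQP0 n.zero_le

theorem agmIntegral_eq_of_tendsto {M : ℝ}
    (hPM : Tendsto P atTop (𝓝 M)) (hQM : Tendsto Q atTop (𝓝 M)) :
    agmIntegral (P 0) (Q 0) = ENNReal.ofReal (π / (2 * M)) := by
  have hM : 0 < M := agm_lim_pos hP hQ hQ0 hQP0 hQM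
  have hlim {R : ℕ → ℝ} (hR : Tendsto R atTop (𝓝 M)) :
      Tendsto (fun n => ENNReal.ofReal (π / (2 * R n))) atTop (𝓝 (ENNReal.ofReal (π / (2 * M)))) :=
    ENNReal.tendsto_ofReal (tendsto_const_nhds.div (hR.const_mul 2) (by positivity))
  refine le_antisymm (ge_of_tendsto' (hlim hQM) fun n => ?_) (le_of_tendsto' (hlim hPM) fun n => ?_)
  all_goals
    obtain ⟨hq, hqp⟩ := agm_pos_le hP hQ hQ0 hQP0 n
    rw [← agmIntegral_agm_seq hP hQ hQ0 hQP0 n]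
  · exact agmIntegral_le hq hqp
  · exact le_agmIntegral hq hqp

end AGMSequence

/-- Gauss's theorem on the lemniscate: the quarter-arclength integral
`∫₀¹ dt/√(1 − t⁴)` equals `π/(2·M(1, √2))`, where `M(1, √2)` is the
arithmetic–geometric mean of `1` and `√2`. -/
theorem gauss_lemniscate (P Q : ℕ → ℝ)
    (hP0 : P 0 = Real.sqrt 2) (hQ0 : Q 0 = 1)
    (hP : ∀ n, P (n + 1) = (P n + Q n) / 2)
    (hQ : ∀ n, Q (n + 1) = Real.sqrt (P n * Q n))
    (M : ℝ) (hM : Tendsto P atTop (nhds M)) (hM' : Tendsto Q atTop (nhds M)) :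
    ∫ t in (0:ℝ)..1, 1 / Real.sqrt (1 - t ^ 4) = Real.pi / (2 * M) := by
  have hQ0pos : 0 < Q 0 := hQ0 ▸ one_pos
  have hQP0 : Q 0 ≤ P 0 := by rw [hP0, hQ0]; exact one_le_sqrt.2 one_le_two
  have hM0 : 0 < M := agm_lim_pos hP hQ hQ0pos hQP0 hM'
  rw [intervalIntegral.integral_of_le zero_le_one, integral_Ioc_eq_integral_Ioo,
    integral_eq_lintegral_of_nonneg_ae (ae_of_all _ fun t => by positivity)
      (Measurable.aestronglyMeasurable (by fun_prop)),
    ← agmIntegral_sqrt_two_one, ← hP0, ← hQ0, agmIntegral_eq_of_tendsto hP hQ hQ0pos hQP0 hM hM',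
    ENNReal.toReal_ofReal (by positivity)]
end
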